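/- arXiv:math-ph/0411083 — 7 statements merged into one kernel-verified Lean document; each statement's English description precedes it below -/
import Mathlib

section
/- Let t_c > 0, α > 0, β > 0, I ⊆ ℝ a nonempty compact interval, and f, g : ℝ → ℂ smooth. Then ‖f·g‖_{(I,α+β,t_c)} ≤ B(α,β) · ‖f‖_{(I,α,t_c)} · ‖g‖_{(I,β,t_c)}, where B(α,β) = Γ(α)Γ(β)/Γ(α+β) is the Beta function. -/
open scoped ENNReal

open Finset in
private lemma prod_vandermonde (α β : ℝ) : ∀ k : ℕ,
    ∑ ij ∈ Finset.HasAntidiagonal.antidiagonal k, (k.choose ij.1 : ℝ) *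
      ((∏ i ∈ Finset.range ij.1, (α + i)) * (∏ j ∈ Finset.range ij.2, (β + j))) =
    ∏ i ∈ Finset.range k, (α + β + i)
  | 0 => by simp
  | (k + 1) => by
    rw [Finset.sum_antidiagonal_choose_succ_mul
      (fun i j => (∏ i ∈ Finset.range i, (α + i)) * (∏ j ∈ Finset.range j, (β + j))) k,
      ← Finset.sum_add_distrib, Finset.prod_range_succ, ← prod_vandermonde α β k,
      Finset.sum_mul]
    refine Finset.sum_congr rfl fun ij hij => ?_
    have hsum : (ij.1 : ℝ) + (ij.2 : ℝ) = k := by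
      have := Finset.HasAntidiagonal.mem_antidiagonal.mp hij
      push_cast [← this]; ring
    have hc : (k.choose ij.2 : ℝ) = (k.choose ij.1 : ℝ) := by
      rw [Nat.choose_symm_of_eq_add (Finset.HasAntidiagonal.mem_antidiagonal.mp hij).symm]
    rw [hc, Finset.prod_range_succ, Finset.prod_range_succ]
    have : α + β + (k : ℝ) = (α + ij.1) + (β + ij.2) := by rw [← hsum]; ring
    rw [this]; ring

private lemma gamma_prod {x : ℝ} (hx : 0 < x) : ∀ k : ℕ,
    Real.Gamma (x + k) = Real.Gamma x * ∏ i ∈ Finset.range k, (x + i)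
  | 0 => by simp
  | (k + 1) => by
    have h1 : x + ((k : ℕ) + 1 : ℕ) = (x + k) + 1 := by push_cast; ring
    rw [h1, Real.Gamma_add_one (by positivity), gamma_prod hx k, Finset.prod_range_succ]
    ring

private lemma gamma_vandermonde {α β : ℝ} (hα : 0 < α) (hβ : 0 < β) (k : ℕ) :
    ∑ ij ∈ Finset.HasAntidiagonal.antidiagonal k, (k.choose ij.1 : ℝ) *
      (Real.Gamma (α + ij.1) * Real.Gamma (β + ij.2)) =
    Real.Gamma α * Real.Gamma β * Real.Gamma (α + β + k) / Real.Gamma (α + β) := by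
  have hab : (0:ℝ) < Real.Gamma (α + β) := Real.Gamma_pos_of_pos (by positivity)
  rw [gamma_prod (by positivity : (0:ℝ) < α + β) k]
  have : ∀ ij ∈ Finset.HasAntidiagonal.antidiagonal k, (k.choose ij.1 : ℝ) *
      (Real.Gamma (α + ij.1) * Real.Gamma (β + ij.2)) =
        (Real.Gamma α * Real.Gamma β) * ((k.choose ij.1 : ℝ) *
      ((∏ i ∈ Finset.range ij.1, (α + i)) * (∏ j ∈ Finset.range ij.2, (β + j)))) := by
    intro ij _
    rw [gamma_prod hα ij.1, gamma_prod hβ ij.2]; ring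
  rw [Finset.sum_congr rfl this, ← Finset.mul_sum, prod_vandermonde]
  field_simp

/-- The norm `‖f‖_{(I,α,t_c)} = sup_{t ∈ I} sup_{k ∈ ℕ} |f^(k)(t)| · t_c^(α+k) / Γ(α+k)`,
taking values in `[0,∞]`. -/
noncomputable def facNorm (I : Set ℝ) (α tc : ℝ) (f : ℝ → ℂ) : ℝ≥0∞ :=
  ⨆ t ∈ I, ⨆ k : ℕ,
    ENNReal.ofReal (‖iteratedDeriv k f t‖ * tc ^ (α + k : ℝ) / Real.Gamma (α + k))

/-- The Beta function `B(α,β) = Γ(α)Γ(β)/Γ(α+β)`. -/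
noncomputable def realBeta (a b : ℝ) : ℝ := Real.Gamma a * Real.Gamma b / Real.Gamma (a + b)

private lemma le_facNorm {I : Set ℝ} {α tc : ℝ} {f : ℝ → ℂ} {t : ℝ} (ht : t ∈ I) (k : ℕ) :
    ENNReal.ofReal (‖iteratedDeriv k f t‖ * tc ^ (α + k : ℝ) / Real.Gamma (α + k)) ≤
      facNorm I α tc f := by
  rw [facNorm]
  refine le_trans ?_ (le_iSup₂ (f := fun (t : ℝ) (_ : t ∈ I) => ⨆ k : ℕ,
    ENNReal.ofReal (‖iteratedDeriv k f t‖ * tc ^ (α + k : ℝ) / Real.Gamma (α + k))) t ht)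
  exact le_iSup (fun k : ℕ =>
    ENNReal.ofReal (‖iteratedDeriv k f t‖ * tc ^ (α + k : ℝ) / Real.Gamma (α + k))) k

theorem stmt1 (tc α β : ℝ) (htc : 0 < tc) (hα : 0 < α) (hβ : 0 < β)
    (a b : ℝ) (hab : a ≤ b) (f g : ℝ → ℂ)
    (hf : ContDiff ℝ (⊤ : ℕ∞) f) (hg : ContDiff ℝ (⊤ : ℕ∞) g) :
    facNorm (Set.Icc a b) (α + β) tc (fun t => f t * g t) ≤
      ENNReal.ofReal (realBeta α β) *
        (facNorm (Set.Icc a b) α tc f * facNorm (Set.Icc a b) β tc g) := by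
  rw [facNorm]
  refine iSup₂_le fun t ht => iSup_le fun k => ?_
  set γ := α + β with hγ
  have hGγ : (0:ℝ) < Real.Gamma (γ + k) := Real.Gamma_pos_of_pos (by positivity)
  -- Leibniz bound
  have hleib : ‖iteratedDeriv k (fun t => f t * g t) t‖ ≤
      ∑ ij ∈ Finset.HasAntidiagonal.antidiagonal k,
        (k.choose ij.1 : ℝ) * ‖iteratedDeriv ij.1 f t‖ * ‖iteratedDeriv ij.2 g t‖ := by
    rw [Finset.Nat.sum_antidiagonal_eq_sum_range_succ_mk]
    simpa only [norm_iteratedFDeriv_eq_norm_iteratedDeriv] using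
      norm_iteratedFDeriv_mul_le hf hg t (by exact_mod_cast le_top)
  calc ENNReal.ofReal (‖iteratedDeriv k (fun t => f t * g t) t‖ * tc ^ (γ + k : ℝ) /
        Real.Gamma (γ + k))
      ≤ ENNReal.ofReal ((∑ ij ∈ Finset.HasAntidiagonal.antidiagonal k,
          (k.choose ij.1 : ℝ) * ‖iteratedDeriv ij.1 f t‖ * ‖iteratedDeriv ij.2 g t‖) *
          tc ^ (γ + k : ℝ) / Real.Gamma (γ + k)) := by
        apply ENNReal.ofReal_le_ofReal
        gcongr
    _ = ∑ ij ∈ Finset.HasAntidiagonal.antidiagonal k, ENNReal.ofReal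
          ((k.choose ij.1 : ℝ) * ‖iteratedDeriv ij.1 f t‖ * ‖iteratedDeriv ij.2 g t‖ *
          tc ^ (γ + k : ℝ) / Real.Gamma (γ + k)) := by
        rw [Finset.sum_mul, Finset.sum_div, ENNReal.ofReal_sum_of_nonneg]
        intro ij _
        apply div_nonneg _ hGγ.le
        positivity
    _ = ∑ ij ∈ Finset.HasAntidiagonal.antidiagonal k,
          ENNReal.ofReal ((k.choose ij.1 : ℝ) *
            (Real.Gamma (α + ij.1) * Real.Gamma (β + ij.2)) / Real.Gamma (γ + k)) *
          (ENNReal.ofReal (‖iteratedDeriv ij.1 f t‖ * tc ^ (α + ij.1 : ℝ) /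
              Real.Gamma (α + ij.1)) *
           ENNReal.ofReal (‖iteratedDeriv ij.2 g t‖ * tc ^ (β + ij.2 : ℝ) /
              Real.Gamma (β + ij.2))) := by
        refine Finset.sum_congr rfl fun ij hij => ?_
        have hsum : (ij.1 : ℝ) + (ij.2 : ℝ) = k := by
          have := Finset.HasAntidiagonal.mem_antidiagonal.mp hij
          push_cast [← this]; ring
        have hG1 : (0:ℝ) < Real.Gamma (α + ij.1) := Real.Gamma_pos_of_pos (by positivity)
        have hG2 : (0:ℝ) < Real.Gamma (β + ij.2) := Real.Gamma_pos_of_pos (by positivity)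
        have htcsplit : tc ^ (γ + k : ℝ) = tc ^ (α + ij.1 : ℝ) * tc ^ (β + ij.2 : ℝ) := by
          rw [← Real.rpow_add htc]
          congr 1
          rw [hγ, ← hsum]; ring
        rw [← ENNReal.ofReal_mul (by positivity), ← ENNReal.ofReal_mul
          (by apply div_nonneg _ hGγ.le; positivity)]
        congr 1
        rw [htcsplit]
        field_simp
    _ ≤ ∑ ij ∈ Finset.HasAntidiagonal.antidiagonal k,
          ENNReal.ofReal ((k.choose ij.1 : ℝ) *
            (Real.Gamma (α + ij.1) * Real.Gamma (β + ij.2)) / Real.Gamma (γ + k)) *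
          (facNorm (Set.Icc a b) α tc f * facNorm (Set.Icc a b) β tc g) := by
        gcongr with ij hij
        · exact le_facNorm ht ij.1
        · exact le_facNorm ht ij.2
    _ = ENNReal.ofReal (realBeta α β) *
          (facNorm (Set.Icc a b) α tc f * facNorm (Set.Icc a b) β tc g) := by
        rw [← Finset.sum_mul]
        congr 1
        rw [← ENNReal.ofReal_sum_of_nonneg (fun ij _ => by
          have hG1 : (0:ℝ) < Real.Gamma (α + ij.1) := Real.Gamma_pos_of_pos (by positivity)
          have hG2 : (0:ℝ) < Real.Gamma (β + ij.2) := Real.Gamma_pos_of_pos (by positivity)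
          apply div_nonneg _ hGγ.le
          positivity)]
        congr 1
        rw [← Finset.sum_div, gamma_vandermonde hα hβ k, realBeta]
        have hab' : (0:ℝ) < Real.Gamma (α + β) := Real.Gamma_pos_of_pos (by positivity)
        rw [hγ]
        field_simp
end

section
/- Let t_c > 0, α > 1, I ⊆ ℝ a nonempty compact interval, s ∈ I, and f : ℝ → ℂ smooth with ‖f‖_{(I,α,t_c)} < ∞. Let F(t) := ∫_s^t f(r) dr and L := sup_{t ∈ I} |t − s|. Then ‖F‖_{(I,α−1,t_c)} ≤ max{(α−1)·L/t_c, 1} · ‖f‖_{(I,α,t_c)}. In particular, if α > 2 and |t − s| ≤ t_c for all t ∈ I, then ‖F‖_{(I,α−1,t_c)} ≤ (α−1) · ‖f‖_{(I,α,t_c)}. -/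
open scoped ENNReal

theorem stmt4 (tc α : ℝ) (htc : 0 < tc) (hα : 1 < α)
    (a b : ℝ) (hab : a ≤ b) (s : ℝ) (hs : s ∈ Set.Icc a b)
    (f : ℝ → ℂ) (hf : ContDiff ℝ (⊤ : ℕ∞) f)
    (hfin : facNorm (Set.Icc a b) α tc f ≠ ⊤)
    (F : ℝ → ℂ) (hF : ∀ t, F t = ∫ r in s..t, f r)
    (L : ℝ) (hL : L = sSup ((fun t => |t - s|) '' Set.Icc a b)) :
    facNorm (Set.Icc a b) (α - 1) tc F ≤
        ENNReal.ofReal (max ((α - 1) * L / tc) 1) * facNorm (Set.Icc a b) α tc f ∧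
      (2 < α → (∀ t ∈ Set.Icc a b, |t - s| ≤ tc) →
        facNorm (Set.Icc a b) (α - 1) tc F ≤
          ENNReal.ofReal (α - 1) * facNorm (Set.Icc a b) α tc f) := by
  have hbdd : BddAbove ((fun t => |t - s|) '' Set.Icc a b) := by
    refine ⟨b - a, ?_⟩
    rintro x ⟨t, ht, rfl⟩
    rw [abs_sub_le_iff]
    exact ⟨by linarith [ht.1, ht.2, hs.1, hs.2], by linarith [ht.1, ht.2, hs.1, hs.2]⟩
  have hL0 : 0 ≤ L := by
    rw [hL]
    have hmem : |s - s| ∈ (fun t => |t - s|) '' Set.Icc a b := ⟨s, hs, rfl⟩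
    simpa using le_csSup hbdd hmem
  have hLt : ∀ t ∈ Set.Icc a b, |t - s| ≤ L := fun t ht => hL ▸ le_csSup hbdd ⟨t, ht, rfl⟩
  set N : ℝ := (facNorm (Set.Icc a b) α tc f).toReal with hNdef
  have hN0 : 0 ≤ N := ENNReal.toReal_nonneg
  have hNf : ENNReal.ofReal N = facNorm (Set.Icc a b) α tc f := ENNReal.ofReal_toReal hfin
  have hGpos : ∀ k : ℕ, 0 < Real.Gamma (α + k) := fun k =>
    Real.Gamma_pos_of_pos (by positivity)
  have htcp : ∀ x : ℝ, 0 < tc ^ (x : ℝ) := fun x => Real.rpow_pos_of_pos htc x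
  have hterm : ∀ t ∈ Set.Icc a b, ∀ k : ℕ,
      ENNReal.ofReal (‖iteratedDeriv k f t‖ * tc ^ (α + k : ℝ) / Real.Gamma (α + k)) ≤
        facNorm (Set.Icc a b) α tc f := by
    intro t ht k
    rw [facNorm]
    refine le_trans ?_ (le_iSup₂ t ht)
    exact le_iSup (fun k : ℕ => ENNReal.ofReal (‖iteratedDeriv k f t‖ * tc ^ (α + k : ℝ) / Real.Gamma (α + k))) k
  have hbound : ∀ t ∈ Set.Icc a b, ∀ k : ℕ,
      ‖iteratedDeriv k f t‖ ≤ N * Real.Gamma (α + k) / tc ^ (α + k : ℝ) := by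
    intro t ht k
    have h1 := (hterm t ht k).trans_eq hNf.symm
    have h2 : ‖iteratedDeriv k f t‖ * tc ^ (α + k : ℝ) / Real.Gamma (α + k) ≤ N :=
      (ENNReal.ofReal_le_ofReal_iff hN0).mp h1
    rw [div_le_iff₀ (hGpos k)] at h2
    rw [le_div_iff₀ (htcp _)]
    linarith
  have hderiv : deriv F = f := by
    have hFe : F = fun u => ∫ r in s..u, f r := funext hF
    funext t
    rw [hFe]
    exact Continuous.deriv_integral f hf.continuous s t
  have hFd : ∀ j : ℕ, iteratedDeriv (j + 1) F = iteratedDeriv j f := by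
    intro j; rw [iteratedDeriv_succ', hderiv]
  have hmax1 : (1:ℝ) ≤ max ((α - 1) * L / tc) 1 := le_max_right _ _
  have main : facNorm (Set.Icc a b) (α - 1) tc F ≤
      ENNReal.ofReal (max ((α - 1) * L / tc) 1) * facNorm (Set.Icc a b) α tc f := by
    rw [facNorm]
    refine iSup₂_le fun t ht => iSup_le fun k => ?_
    cases k with
    | succ j =>
      have hcast : ((α - 1) + ((j + 1 : ℕ) : ℝ)) = α + (j : ℕ) := by push_cast; ring
      rw [hFd j, hcast]
      refine le_trans (hterm t ht j) ?_
      exact le_mul_of_one_le_left zero_le (by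
        rw [show (1:ℝ≥0∞) = ENNReal.ofReal 1 by simp]
        exact ENNReal.ofReal_le_ofReal hmax1)
    | zero =>
      have hcast : ((α - 1) + ((0 : ℕ) : ℝ)) = α - 1 := by push_cast; ring
      rw [hcast]
      have hGα : Real.Gamma α = (α - 1) * Real.Gamma (α - 1) := by
        have := Real.Gamma_add_one (show α - 1 ≠ 0 by linarith)
        rw [show α - 1 + 1 = α by ring] at this
        exact this
      have hG1pos : 0 < Real.Gamma (α - 1) :=
        Real.Gamma_pos_of_pos (by linarith)
      have hFt : ‖F t‖ ≤ N * Real.Gamma α / tc ^ (α : ℝ) * |t - s| := by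
        rw [hF t]
        apply intervalIntegral.norm_integral_le_of_norm_le_const
        intro r hr
        have hr' : r ∈ Set.Icc a b :=
          Set.Ioc_subset_Icc_self.trans (Set.ordConnected_Icc.uIcc_subset hs ht) hr
        have := hbound r hr' 0
        simpa using this
      have htcα : tc ^ (α : ℝ) = tc ^ (α - 1 : ℝ) * tc := by
        have h := Real.rpow_add htc (α - 1) 1
        rw [sub_add_cancel, Real.rpow_one] at h
        exact h
      have key : ‖F t‖ * tc ^ (α - 1 : ℝ) / Real.Gamma (α - 1) ≤ (α - 1) * L / tc * N := by
        have step1 : ‖F t‖ * tc ^ (α - 1 : ℝ) / Real.Gamma (α - 1) ≤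
            (N * Real.Gamma α / tc ^ (α : ℝ) * |t - s|) * tc ^ (α - 1 : ℝ) /
              Real.Gamma (α - 1) := by
          gcongr
        refine step1.trans ?_
        have heq : (N * Real.Gamma α / tc ^ (α : ℝ) * |t - s|) * tc ^ (α - 1 : ℝ) /
            Real.Gamma (α - 1) = (α - 1) * |t - s| / tc * N := by
          rw [hGα, htcα]
          field_simp
        rw [heq]
        gcongr
        exact hLt t ht
      calc ENNReal.ofReal (‖F t‖ * tc ^ (α - 1 : ℝ) / Real.Gamma (α - 1))
          ≤ ENNReal.ofReal (max ((α - 1) * L / tc) 1 * N) := by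
            refine ENNReal.ofReal_le_ofReal (key.trans ?_)
            exact mul_le_mul_of_nonneg_right (le_max_left _ _) hN0
        _ = ENNReal.ofReal (max ((α - 1) * L / tc) 1) * ENNReal.ofReal N :=
            ENNReal.ofReal_mul (by linarith)
        _ = _ := by rw [hNf]
  refine ⟨main, fun hα2 hts => ?_⟩
  have hLtc : L ≤ tc := by
    rw [hL]
    refine csSup_le ⟨|s - s|, ⟨s, hs, rfl⟩⟩ ?_
    rintro x ⟨t, ht, rfl⟩
    exact hts t ht
  have hmax : max ((α - 1) * L / tc) 1 ≤ α - 1 := by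
    apply max_le
    · rw [div_le_iff₀ htc]
      nlinarith
    · linarith
  exact main.trans (mul_le_mul_left (ENNReal.ofReal_le_ofReal hmax) _)
end

section
/- Let θ' : ℝ → ℝ be smooth, I ⊆ ℝ a nonempty compact interval, τ > 0, and suppose Q := ‖θ'‖_{(I,1,τ)} < ∞. Let x_n, y_n, z_n be the functions produced by the superadiabatic recursion from θ'. Define real sequences C_n, D_n by C_1 = Q/2, D_1 = 0, and for n ≥ 2: C_n = C_{n−1} if n is even and C_n = C_{n−1} + Q·D_{n−1}/(n−1) if n is odd; D_n = Σ_{k=1}^{n−1} B(k,n−k)·(C_k·C_{n−k} + D_k·D_{n−k}) if n is even and D_n = 0 if n is odd, where B is the Beta function. Then for every n ≥ 1: ‖x_n‖_{(I,n,τ)} ≤ C_n, ‖z_n‖_{(I,n,τ)} ≤ C_n, and ‖y_n‖_{(I,n,τ)} ≤ D_n. -/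
open scoped ENNReal

/-- The superadiabatic recursion: `sa θ n = (x_n, y_n, z_n)`, with
`x₁ = -(i/2)θ`, `y₁ = z₁ = 0`, and for `n ≥ 2`:
`x_n = -i(z_{n-1}' - θ·y_{n-1})`, `z_n = -i·x_{n-1}'`,
`y_n = ∑_{j=1}^{n-1} (-x_j·x_{n-j} + y_j·y_{n-j} + z_j·z_{n-j})`. -/
noncomputable def sa (θ : ℝ → ℂ) : ℕ → (ℝ → ℂ) × (ℝ → ℂ) × (ℝ → ℂ)
  | 0 => (0, 0, 0)
  | 1 => (fun t => -(Complex.I / 2) * θ t, 0, 0)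
  | n + 2 =>
      (fun t => -Complex.I * (deriv (sa θ (n + 1)).2.2 t - θ t * (sa θ (n + 1)).2.1 t),
       fun t => ∑ j ∈ (Finset.Icc 1 (n + 1)).attach,
         (-(sa θ j.1).1 t * (sa θ (n + 2 - j.1)).1 t
           + (sa θ j.1).2.1 t * (sa θ (n + 2 - j.1)).2.1 t
           + (sa θ j.1).2.2 t * (sa θ (n + 2 - j.1)).2.2 t),
       fun t => -Complex.I * deriv (sa θ (n + 1)).1 t)
  termination_by n => n
  decreasing_by
    all_goals
      first
        | omega
        | (have hj := Finset.mem_Icc.mp j.2; omega)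

/-- `x_n` of the superadiabatic recursion. -/
noncomputable def saX (θ : ℝ → ℂ) (n : ℕ) : ℝ → ℂ := (sa θ n).1
/-- `y_n` of the superadiabatic recursion. -/
noncomputable def saY (θ : ℝ → ℂ) (n : ℕ) : ℝ → ℂ := (sa θ n).2.1
/-- `z_n` of the superadiabatic recursion. -/
noncomputable def saZ (θ : ℝ → ℂ) (n : ℕ) : ℝ → ℂ := (sa θ n).2.2

/-- The sequences `(C_n, D_n)`: `C₁ = c/2`, `D₁ = 0`, and for `n ≥ 2`:
`C_n = C_{n-1}` for even `n`, `C_n = C_{n-1} + c·D_{n-1}/(n-1)` for odd `n`;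
`D_n = ∑_{k=1}^{n-1} B(k,n-k)(C_k C_{n-k} + D_k D_{n-k})` for even `n`, `D_n = 0` for odd `n`. -/
noncomputable def CD (c : ℝ) : ℕ → ℝ × ℝ
  | 0 => (0, 0)
  | 1 => (c / 2, 0)
  | n + 2 =>
      (if (n + 2) % 2 = 0 then (CD c (n + 1)).1
         else (CD c (n + 1)).1 + c * (CD c (n + 1)).2 / (n + 1),
       if (n + 2) % 2 = 0 then
         ∑ k ∈ (Finset.Icc 1 (n + 1)).attach,
           realBeta k.1 ((n + 2 - k.1 : ℕ) : ℝ) *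
             ((CD c k.1).1 * (CD c (n + 2 - k.1)).1 + (CD c k.1).2 * (CD c (n + 2 - k.1)).2)
       else 0)
  termination_by n => n
  decreasing_by
    all_goals
      first
        | omega
        | (have hk := Finset.mem_Icc.mp k.2; omega)

open scoped ContDiff

section Helpers

/-! ### Basic facNorm lemmas -/

lemma facNorm_le_ofReal {I : Set ℝ} {α τ : ℝ} {f : ℝ → ℂ} {C : ℝ}
    (h : ∀ t ∈ I, ∀ k : ℕ,
      ‖iteratedDeriv k f t‖ * τ ^ (α + k : ℝ) / Real.Gamma (α + k) ≤ C) :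
    facNorm I α τ f ≤ ENNReal.ofReal C := by
  refine iSup₂_le fun t ht => iSup_le fun k => ?_
  exact ENNReal.ofReal_le_ofReal (h t ht k)

lemma le_of_facNorm_le {I : Set ℝ} {α τ : ℝ} {f : ℝ → ℂ} {C : ℝ} (hC : 0 ≤ C)
    (h : facNorm I α τ f ≤ ENNReal.ofReal C) {t : ℝ} (ht : t ∈ I) (k : ℕ) :
    ‖iteratedDeriv k f t‖ * τ ^ (α + k : ℝ) / Real.Gamma (α + k) ≤ C := by
  have h1 : ENNReal.ofReal (‖iteratedDeriv k f t‖ * τ ^ (α + k : ℝ) / Real.Gamma (α + k))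
      ≤ facNorm I α τ f := by
    unfold facNorm
    exact le_iSup₂_of_le t ht (le_iSup_of_le k le_rfl)
  rw [← ENNReal.ofReal_le_ofReal_iff hC]
  exact h1.trans h

lemma norm_iteratedDeriv_le_of_facNorm_le {I : Set ℝ} {α τ : ℝ} (hτ : 0 < τ) (hα : 0 < α)
    {f : ℝ → ℂ} {C : ℝ} (hC : 0 ≤ C)
    (h : facNorm I α τ f ≤ ENNReal.ofReal C) {t : ℝ} (ht : t ∈ I) (k : ℕ) :
    ‖iteratedDeriv k f t‖ ≤ C * Real.Gamma (α + k) / τ ^ (α + k : ℝ) := by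
  have hΓ : 0 < Real.Gamma (α + k) := Real.Gamma_pos_of_pos (by positivity)
  have hτ' : 0 < τ ^ (α + k : ℝ) := Real.rpow_pos_of_pos hτ _
  have h1 := le_of_facNorm_le hC h ht k
  rw [div_le_iff₀ hΓ] at h1
  rw [le_div_iff₀ hτ']
  calc ‖iteratedDeriv k f t‖ * τ ^ (α + k : ℝ) ≤ C * Real.Gamma (α + k) := h1
  
lemma iteratedDeriv_zero_fun (k : ℕ) : iteratedDeriv k (fun _ : ℝ => (0 : ℂ)) = fun _ => 0 := by
  induction k with
  | zero => simp [iteratedDeriv_zero]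
  | succ n ih => rw [iteratedDeriv_succ, ih]; funext x; simp

lemma facNorm_zero_fun {I : Set ℝ} {α τ : ℝ} :
    facNorm I α τ (fun _ => (0 : ℂ)) ≤ ENNReal.ofReal 0 := by
  refine facNorm_le_ofReal fun t ht k => ?_
  rw [iteratedDeriv_zero_fun]
  simp

lemma facNorm_deriv_le {I : Set ℝ} {α τ : ℝ} (f : ℝ → ℂ) :
    facNorm I (α + 1) τ (deriv f) ≤ facNorm I α τ f := by
  refine iSup₂_le fun t ht => iSup_le fun k => ?_
  unfold facNorm
  refine le_iSup₂_of_le t ht (le_iSup_of_le (k + 1) ?_)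
  rw [← iteratedDeriv_succ']
  have h1 : α + 1 + (k : ℝ) = α + ((k + 1 : ℕ) : ℝ) := by push_cast; ring
  rw [h1]

end Helpers
section Helpers2
open scoped ContDiff

lemma iteratedDeriv_add_apply' {f g : ℝ → ℂ} {k : ℕ}
    (hf : ContDiff ℝ (k : ℕ∞) f) (hg : ContDiff ℝ (k : ℕ∞) g) (t : ℝ) :
    iteratedDeriv k (fun t => f t + g t) t = iteratedDeriv k f t + iteratedDeriv k g t := by
  simp only [← iteratedDerivWithin_univ]
  exact iteratedDerivWithin_add (Set.mem_univ t) uniqueDiffOn_univ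
    hf.contDiffWithinAt hg.contDiffWithinAt

lemma iteratedDeriv_sub_apply' {f g : ℝ → ℂ} {k : ℕ}
    (hf : ContDiff ℝ (k : ℕ∞) f) (hg : ContDiff ℝ (k : ℕ∞) g) (t : ℝ) :
    iteratedDeriv k (fun t => f t - g t) t = iteratedDeriv k f t - iteratedDeriv k g t := by
  simp only [← iteratedDerivWithin_univ]
  exact iteratedDerivWithin_sub (Set.mem_univ t) uniqueDiffOn_univ
    hf.contDiffWithinAt hg.contDiffWithinAt

lemma iteratedDeriv_cmul_apply' {f : ℝ → ℂ} {k : ℕ}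
    (hf : ContDiff ℝ (k : ℕ∞) f) (c : ℂ) (t : ℝ) :
    iteratedDeriv k (fun t => c * f t) t = c * iteratedDeriv k f t := by
  simp only [← iteratedDerivWithin_univ]
  have := iteratedDerivWithin_const_smul (F := ℂ) (R := ℂ) (Set.mem_univ t) uniqueDiffOn_univ
    c hf.contDiffWithinAt
  simpa [Pi.smul_def, smul_eq_mul] using this

lemma smooth_of_infty {f : ℝ → ℂ} (hf : ContDiff ℝ ∞ f) (k : ℕ) : ContDiff ℝ (k : ℕ∞) f :=
  hf.of_le (by exact_mod_cast le_top)

lemma facNorm_add_le {I : Set ℝ} {α τ : ℝ} {f g : ℝ → ℂ} {C D : ℝ}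
    (hf : ContDiff ℝ ∞ f) (hg : ContDiff ℝ ∞ g)
    (hfb : facNorm I α τ f ≤ ENNReal.ofReal C) (hgb : facNorm I α τ g ≤ ENNReal.ofReal D)
    (hC : 0 ≤ C) (hD : 0 ≤ D) :
    facNorm I α τ (fun t => f t + g t) ≤ ENNReal.ofReal (C + D) := by
  refine facNorm_le_ofReal fun t ht k => ?_
  rw [iteratedDeriv_add_apply' (smooth_of_infty hf k) (smooth_of_infty hg k)]
  have h1 := le_of_facNorm_le hC hfb ht k
  have h2 := le_of_facNorm_le hD hgb ht k
  have hn : ‖iteratedDeriv k f t + iteratedDeriv k g t‖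
      ≤ ‖iteratedDeriv k f t‖ + ‖iteratedDeriv k g t‖ := norm_add_le _ _
  have hτ' : 0 ≤ τ ^ (α + k : ℝ) / Real.Gamma (α + k) ∨
      τ ^ (α + k : ℝ) / Real.Gamma (α + k) < 0 := le_or_gt _ _
  rcases hτ' with hp | hp
  · calc ‖iteratedDeriv k f t + iteratedDeriv k g t‖ * τ ^ (α + k : ℝ) / Real.Gamma (α + k)
        = ‖iteratedDeriv k f t + iteratedDeriv k g t‖ * (τ ^ (α + k : ℝ) / Real.Gamma (α + k)) :=
          by ring
      _ ≤ (‖iteratedDeriv k f t‖ + ‖iteratedDeriv k g t‖) *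
            (τ ^ (α + k : ℝ) / Real.Gamma (α + k)) := by
          exact mul_le_mul_of_nonneg_right hn hp
      _ = ‖iteratedDeriv k f t‖ * τ ^ (α + k : ℝ) / Real.Gamma (α + k)
            + ‖iteratedDeriv k g t‖ * τ ^ (α + k : ℝ) / Real.Gamma (α + k) := by ring
      _ ≤ C + D := add_le_add h1 h2
  · calc ‖iteratedDeriv k f t + iteratedDeriv k g t‖ * τ ^ (α + k : ℝ) / Real.Gamma (α + k)
        = ‖iteratedDeriv k f t + iteratedDeriv k g t‖ * (τ ^ (α + k : ℝ) / Real.Gamma (α + k)) :=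
          by ring
      _ ≤ 0 := mul_nonpos_of_nonneg_of_nonpos (norm_nonneg _) hp.le
      _ ≤ C + D := by positivity

lemma facNorm_sub_le {I : Set ℝ} {α τ : ℝ} {f g : ℝ → ℂ} {C D : ℝ}
    (hf : ContDiff ℝ ∞ f) (hg : ContDiff ℝ ∞ g)
    (hfb : facNorm I α τ f ≤ ENNReal.ofReal C) (hgb : facNorm I α τ g ≤ ENNReal.ofReal D)
    (hC : 0 ≤ C) (hD : 0 ≤ D) :
    facNorm I α τ (fun t => f t - g t) ≤ ENNReal.ofReal (C + D) := by
  have hng : ContDiff ℝ ∞ (fun t => -g t) := hg.neg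
  have hngb : facNorm I α τ (fun t => -g t) ≤ ENNReal.ofReal D := by
    refine facNorm_le_ofReal fun t ht k => ?_
    have : iteratedDeriv k (fun t => -g t) t = -iteratedDeriv k g t := iteratedDeriv_neg k g t
    rw [this, norm_neg]
    exact le_of_facNorm_le hD hgb ht k
  have := facNorm_add_le hf hng hfb hngb hC hD
  simpa [sub_eq_add_neg] using this

lemma facNorm_cmul_le {I : Set ℝ} {α τ : ℝ} {f : ℝ → ℂ} {C : ℝ} (c : ℂ)
    (hf : ContDiff ℝ ∞ f)
    (hfb : facNorm I α τ f ≤ ENNReal.ofReal C) (hC : 0 ≤ C) :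
    facNorm I α τ (fun t => c * f t) ≤ ENNReal.ofReal (‖c‖ * C) := by
  refine facNorm_le_ofReal fun t ht k => ?_
  rw [iteratedDeriv_cmul_apply' (smooth_of_infty hf k) c t]
  have h1 := le_of_facNorm_le hC hfb ht k
  calc ‖c * iteratedDeriv k f t‖ * τ ^ (α + k : ℝ) / Real.Gamma (α + k)
      = ‖c‖ * (‖iteratedDeriv k f t‖ * τ ^ (α + k : ℝ) / Real.Gamma (α + k)) := by
        rw [norm_mul]; ring
    _ ≤ ‖c‖ * C := mul_le_mul_of_nonneg_left h1 (norm_nonneg c)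

end Helpers2
section Beta
open Finset

lemma realBeta_pos {a b : ℝ} (ha : 0 < a) (hb : 0 < b) : 0 < realBeta a b := by
  unfold realBeta
  have h1 := Real.Gamma_pos_of_pos ha
  have h2 := Real.Gamma_pos_of_pos hb
  have h3 := Real.Gamma_pos_of_pos (by positivity : (0:ℝ) < a + b)
  positivity

lemma realBeta_one_left {b : ℝ} (hb : 0 < b) : realBeta 1 b = 1 / b := by
  unfold realBeta
  rw [Real.Gamma_one, add_comm, Real.Gamma_add_one hb.ne']
  have := Real.Gamma_pos_of_pos hb
  field_simp

lemma realBeta_rec {a b : ℝ} (ha : 0 < a) (hb : 0 < b) :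
    realBeta a (b + 1) + realBeta (a + 1) b = realBeta a b := by
  unfold realBeta
  rw [Real.Gamma_add_one hb.ne', Real.Gamma_add_one ha.ne',
    show a + (b + 1) = (a + b) + 1 by ring, show a + 1 + b = (a + b) + 1 by ring,
    Real.Gamma_add_one (by positivity : a + b ≠ 0)]
  have h1 := Real.Gamma_pos_of_pos (by positivity : (0:ℝ) < a + b)
  have h2 : a + b ≠ 0 := by positivity
  field_simp
  ring

lemma beta_sum (k : ℕ) : ∀ (a b : ℝ), 0 < a → 0 < b →
    ∑ j ∈ range (k + 1), ((k.choose j : ℝ) *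
      (Real.Gamma (a + j) * Real.Gamma (b + ((k - j : ℕ) : ℝ)))) =
      realBeta a b * Real.Gamma (a + b + k) := by
  induction k with
  | zero =>
    intro a b ha hb
    have h3 := Real.Gamma_pos_of_pos (by positivity : (0:ℝ) < a + b)
    simp [realBeta]
    field_simp
  | succ k ih =>
    intro a b ha hb
    have key := Finset.sum_choose_succ_mul
      (fun i j => Real.Gamma (a + i) * Real.Gamma (b + j)) k
    have lhs_eq : ∑ j ∈ range (k + 1 + 1), ((k + 1).choose j : ℝ) *
        (Real.Gamma (a + j) * Real.Gamma (b + ((k + 1 - j : ℕ) : ℝ))) =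
        (∑ i ∈ range (k + 1), (k.choose i : ℝ) *
          (Real.Gamma (a + i) * Real.Gamma (b + ((k + 1 - i : ℕ) : ℝ)))) +
        ∑ i ∈ range (k + 1), (k.choose i : ℝ) *
          (Real.Gamma (a + ((i + 1 : ℕ) : ℝ)) * Real.Gamma (b + ((k - i : ℕ) : ℝ))) := key
    rw [lhs_eq]
    have e1 : ∑ i ∈ range (k + 1), (k.choose i : ℝ) *
        (Real.Gamma (a + i) * Real.Gamma (b + ((k + 1 - i : ℕ) : ℝ))) =
        ∑ i ∈ range (k + 1), (k.choose i : ℝ) *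
        (Real.Gamma (a + i) * Real.Gamma ((b + 1) + ((k - i : ℕ) : ℝ))) := by
      refine Finset.sum_congr rfl fun i hi => ?_
      have hik : i ≤ k := by simpa [Nat.lt_succ_iff] using hi
      have : ((k + 1 - i : ℕ) : ℝ) = ((k - i : ℕ) : ℝ) + 1 := by
        have : k + 1 - i = (k - i) + 1 := by omega
        rw [this]; push_cast; ring
      rw [this]; ring_nf
    have e2 : ∑ i ∈ range (k + 1), (k.choose i : ℝ) *
        (Real.Gamma (a + ((i + 1 : ℕ) : ℝ)) * Real.Gamma (b + ((k - i : ℕ) : ℝ))) =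
        ∑ i ∈ range (k + 1), (k.choose i : ℝ) *
        (Real.Gamma ((a + 1) + i) * Real.Gamma (b + ((k - i : ℕ) : ℝ))) := by
      refine Finset.sum_congr rfl fun i hi => ?_
      have : a + ((i + 1 : ℕ) : ℝ) = (a + 1) + i := by push_cast; ring
      rw [this]
    rw [e1, e2, ih a (b + 1) ha (by positivity), ih (a + 1) b (by positivity) hb]
    have g1 : a + (b + 1) + (k : ℝ) = a + b + ((k + 1 : ℕ) : ℝ) := by push_cast; ring
    have g2 : a + 1 + b + (k : ℝ) = a + b + ((k + 1 : ℕ) : ℝ) := by push_cast; ring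
    rw [g1, g2, ← add_mul, realBeta_rec ha hb]

end Beta
section Prod
open Finset
open scoped ContDiff

lemma facNorm_mul_le {I : Set ℝ} {τ : ℝ} (hτ : 0 < τ) {a b : ℝ} (ha : 0 < a) (hb : 0 < b)
    {f g : ℝ → ℂ} (hf : ContDiff ℝ ∞ f) (hg : ContDiff ℝ ∞ g)
    {C D : ℝ} (hC : 0 ≤ C) (hD : 0 ≤ D)
    (hfb : facNorm I a τ f ≤ ENNReal.ofReal C) (hgb : facNorm I b τ g ≤ ENNReal.ofReal D) :
    facNorm I (a + b) τ (fun t => f t * g t) ≤ ENNReal.ofReal (realBeta a b * (C * D)) := by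
  refine facNorm_le_ofReal fun t ht k => ?_
  have hΓ : 0 < Real.Gamma (a + b + k) := Real.Gamma_pos_of_pos (by positivity)
  have hτk : 0 < τ ^ (a + b + (k : ℝ) : ℝ) := Real.rpow_pos_of_pos hτ _
  -- Leibniz bound
  have hkle : (k : WithTop ℕ∞) ≤ ((⊤ : ℕ∞) : WithTop ℕ∞) := by exact_mod_cast le_top
  have leib := norm_iteratedFDeriv_mul_le (𝕜 := ℝ) hf hg t hkle
  rw [← norm_iteratedFDeriv_eq_norm_iteratedDeriv]
  -- termwise bound
  have term_bd : ∀ i ∈ range (k + 1),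
      (k.choose i : ℝ) * ‖iteratedFDeriv ℝ i f t‖ * ‖iteratedFDeriv ℝ (k - i) g t‖ ≤
      ((k.choose i : ℝ) * (Real.Gamma (a + i) * Real.Gamma (b + ((k - i : ℕ) : ℝ)))) *
        ((C * D) / τ ^ (a + b + (k : ℝ) : ℝ)) := by
    intro i hi
    have hik : i ≤ k := by simpa [Nat.lt_succ_iff] using hi
    have h1 : ‖iteratedFDeriv ℝ i f t‖ ≤ C * Real.Gamma (a + i) / τ ^ (a + (i : ℝ) : ℝ) := by
      rw [norm_iteratedFDeriv_eq_norm_iteratedDeriv]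
      exact norm_iteratedDeriv_le_of_facNorm_le hτ ha hC hfb ht i
    have h2 : ‖iteratedFDeriv ℝ (k - i) g t‖ ≤
        D * Real.Gamma (b + ((k - i : ℕ) : ℝ)) / τ ^ (b + ((k - i : ℕ) : ℝ) : ℝ) := by
      rw [norm_iteratedFDeriv_eq_norm_iteratedDeriv]
      exact norm_iteratedDeriv_le_of_facNorm_le hτ hb hD hgb ht (k - i)
    have hsplit : τ ^ (a + b + (k : ℝ) : ℝ) =
        τ ^ (a + (i : ℝ) : ℝ) * τ ^ (b + ((k - i : ℕ) : ℝ) : ℝ) := by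
      rw [← Real.rpow_add hτ]
      congr 1
      have : ((k - i : ℕ) : ℝ) = (k : ℝ) - i := by
        rw [Nat.cast_sub hik]
      rw [this]; ring
    have hτi : 0 < τ ^ (a + (i : ℝ) : ℝ) := Real.rpow_pos_of_pos hτ _
    have hτj : 0 < τ ^ (b + ((k - i : ℕ) : ℝ) : ℝ) := Real.rpow_pos_of_pos hτ _
    have hΓi : 0 < Real.Gamma (a + i) := Real.Gamma_pos_of_pos (by positivity)
    have hΓj : 0 < Real.Gamma (b + ((k - i : ℕ) : ℝ)) :=
      Real.Gamma_pos_of_pos (by positivity)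
    calc (k.choose i : ℝ) * ‖iteratedFDeriv ℝ i f t‖ * ‖iteratedFDeriv ℝ (k - i) g t‖
        ≤ (k.choose i : ℝ) * (C * Real.Gamma (a + i) / τ ^ (a + (i : ℝ) : ℝ)) *
          (D * Real.Gamma (b + ((k - i : ℕ) : ℝ)) / τ ^ (b + ((k - i : ℕ) : ℝ) : ℝ)) := by
          apply mul_le_mul
          · exact mul_le_mul_of_nonneg_left h1 (by positivity)
          · exact h2
          · exact norm_nonneg _
          · positivity
      _ = ((k.choose i : ℝ) * (Real.Gamma (a + i) * Real.Gamma (b + ((k - i : ℕ) : ℝ)))) *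
          ((C * D) / τ ^ (a + b + (k : ℝ) : ℝ)) := by
          rw [hsplit]; field_simp
  have sum_bd : ‖iteratedFDeriv ℝ k (fun y => f y * g y) t‖ ≤
      (realBeta a b * Real.Gamma (a + b + k)) * ((C * D) / τ ^ (a + b + (k : ℝ) : ℝ)) := by
    refine leib.trans ?_
    calc ∑ i ∈ range (k + 1), (k.choose i : ℝ) * ‖iteratedFDeriv ℝ i f t‖ *
          ‖iteratedFDeriv ℝ (k - i) g t‖
        ≤ ∑ i ∈ range (k + 1), ((k.choose i : ℝ) *
            (Real.Gamma (a + i) * Real.Gamma (b + ((k - i : ℕ) : ℝ)))) *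
            ((C * D) / τ ^ (a + b + (k : ℝ) : ℝ)) := Finset.sum_le_sum term_bd
      _ = (∑ i ∈ range (k + 1), (k.choose i : ℝ) *
            (Real.Gamma (a + i) * Real.Gamma (b + ((k - i : ℕ) : ℝ)))) *
            ((C * D) / τ ^ (a + b + (k : ℝ) : ℝ)) := by rw [← Finset.sum_mul]
      _ = (realBeta a b * Real.Gamma (a + b + k)) * ((C * D) / τ ^ (a + b + (k : ℝ) : ℝ)) := by
          rw [beta_sum k a b ha hb]
  calc ‖iteratedFDeriv ℝ k (fun t => f t * g t) t‖ * τ ^ (a + b + (k : ℝ) : ℝ) /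
        Real.Gamma (a + b + k)
      ≤ ((realBeta a b * Real.Gamma (a + b + k)) * ((C * D) / τ ^ (a + b + (k : ℝ) : ℝ))) *
          τ ^ (a + b + (k : ℝ) : ℝ) / Real.Gamma (a + b + k) := by
        gcongr
    _ = realBeta a b * (C * D) := by field_simp

end Prod
section CDlemmas

lemma CD_one (c : ℝ) : CD c 1 = (c / 2, 0) := by simp [CD]

lemma CD_succ_succ (c : ℝ) (n : ℕ) : CD c (n + 2) =
    (if (n + 2) % 2 = 0 then (CD c (n + 1)).1
       else (CD c (n + 1)).1 + c * (CD c (n + 1)).2 / (n + 1),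
     if (n + 2) % 2 = 0 then
       ∑ k ∈ (Finset.Icc 1 (n + 1)).attach,
         realBeta k.1 ((n + 2 - k.1 : ℕ) : ℝ) *
           ((CD c k.1).1 * (CD c (n + 2 - k.1)).1 + (CD c k.1).2 * (CD c (n + 2 - k.1)).2)
     else 0) := by
  rw [CD]

lemma CD_nonneg {c : ℝ} (hc : 0 ≤ c) : ∀ n : ℕ, 0 ≤ (CD c n).1 ∧ 0 ≤ (CD c n).2 := by
  intro n
  induction n using Nat.strong_induction_on with
  | _ n IH =>
    match n with
    | 0 => simp [CD]
    | 1 => rw [CD_one]; constructor <;> simp <;> positivity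
    | n + 2 =>
      rw [CD_succ_succ]
      constructor
      · dsimp only
        split
        · exact (IH (n + 1) (by omega)).1
        · have h1 := (IH (n + 1) (by omega)).1
          have h2 := (IH (n + 1) (by omega)).2
          have : (0:ℝ) ≤ (n + 1 : ℕ) := by positivity
          positivity
      · dsimp only
        split
        · refine Finset.sum_nonneg fun k _ => ?_
          have hk := Finset.mem_Icc.mp k.2
          have hb : 0 < realBeta k.1 ((n + 2 - k.1 : ℕ) : ℝ) := by
            apply realBeta_pos
            · exact Nat.cast_pos.mpr (by omega)
            · exact Nat.cast_pos.mpr (by omega)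
          have h1 := (IH k.1 (by omega)).1
          have h2 := (IH k.1 (by omega)).2
          have h3 := (IH (n + 2 - k.1) (by omega)).1
          have h4 := (IH (n + 2 - k.1) (by omega)).2
          positivity
        · exact le_rfl

lemma CD_snd_odd {c : ℝ} {n : ℕ} (hn : n % 2 = 1) : (CD c n).2 = 0 := by
  match n with
  | 0 => simp at hn
  | 1 => rw [CD_one]
  | n + 2 =>
    rw [CD_succ_succ]
    dsimp only
    rw [if_neg (by omega)]

lemma CD_fst_mono {c : ℝ} (hc : 0 ≤ c) (n : ℕ) : (CD c (n + 1)).1 ≤ (CD c (n + 2)).1 := by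
  rw [CD_succ_succ]
  dsimp only
  split
  · exact le_rfl
  · have h2 := (CD_nonneg hc (n + 1)).2
    have h3 : (0:ℝ) ≤ c * (CD c (n + 1)).2 / (↑n + 1) := by positivity
    linarith

end CDlemmas
section SA
open scoped ContDiff

lemma saX_one (θ : ℝ → ℂ) : saX θ 1 = fun t => -(Complex.I / 2) * θ t := by
  unfold saX; rw [sa]

lemma saY_one (θ : ℝ → ℂ) : saY θ 1 = fun _ => 0 := by
  unfold saY; rw [sa]; rfl

lemma saZ_one (θ : ℝ → ℂ) : saZ θ 1 = fun _ => 0 := by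
  unfold saZ; rw [sa]; rfl

lemma saX_succ (θ : ℝ → ℂ) (m : ℕ) : saX θ (m + 2) =
    fun t => -Complex.I * (deriv (saZ θ (m + 1)) t - θ t * saY θ (m + 1) t) := by
  unfold saX saY saZ; rw [sa]

lemma saZ_succ (θ : ℝ → ℂ) (m : ℕ) : saZ θ (m + 2) =
    fun t => -Complex.I * deriv (saX θ (m + 1)) t := by
  unfold saX saZ; rw [sa]

lemma saY_succ (θ : ℝ → ℂ) (m : ℕ) : saY θ (m + 2) =
    fun t => ∑ j ∈ (Finset.Icc 1 (m + 1)).attach,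
      (-(saX θ j.1 t) * saX θ (m + 2 - j.1) t
        + saY θ j.1 t * saY θ (m + 2 - j.1) t
        + saZ θ j.1 t * saZ θ (m + 2 - j.1) t) := by
  unfold saX saY saZ; rw [sa]

lemma facNorm_sum_le {I : Set ℝ} {α τ : ℝ} {ι : Type*} {s : Finset ι}
    {f : ι → ℝ → ℂ} {Cf : ι → ℝ}
    (hsm : ∀ i ∈ s, ContDiff ℝ ∞ (f i)) (hCf : ∀ i ∈ s, 0 ≤ Cf i)
    (hb : ∀ i ∈ s, facNorm I α τ (f i) ≤ ENNReal.ofReal (Cf i)) :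
    facNorm I α τ (fun t => ∑ i ∈ s, f i t) ≤ ENNReal.ofReal (∑ i ∈ s, Cf i) := by
  induction s using Finset.cons_induction with
  | empty => simpa using facNorm_zero_fun
  | cons i s hi ih =>
    simp only [Finset.sum_cons]
    exact facNorm_add_le (hsm i (Finset.mem_cons_self i s))
      (ContDiff.sum fun j hj => hsm j (Finset.mem_cons_of_mem hj))
      (hb i (Finset.mem_cons_self i s))
      (ih (fun j hj => hsm j (Finset.mem_cons_of_mem hj))
        (fun j hj => hCf j (Finset.mem_cons_of_mem hj))
        (fun j hj => hb j (Finset.mem_cons_of_mem hj)))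
      (hCf i (Finset.mem_cons_self i s))
      (Finset.sum_nonneg fun j hj => hCf j (Finset.mem_cons_of_mem hj))

end SA

open scoped ContDiff

theorem stmt6 (θ' : ℝ → ℝ) (hθ : ContDiff ℝ (⊤ : ℕ∞) θ')
    (a b : ℝ) (hab : a ≤ b) (τ : ℝ) (hτ : 0 < τ)
    (hfin : facNorm (Set.Icc a b) 1 τ (fun t => (θ' t : ℂ)) ≠ ⊤)
    (Q : ℝ) (hQ : Q = (facNorm (Set.Icc a b) 1 τ (fun t => (θ' t : ℂ))).toReal) :
    ∀ n : ℕ, 1 ≤ n →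
      facNorm (Set.Icc a b) n τ (saX (fun t => (θ' t : ℂ)) n) ≤
          ENNReal.ofReal (CD Q n).1 ∧
        facNorm (Set.Icc a b) n τ (saZ (fun t => (θ' t : ℂ)) n) ≤
          ENNReal.ofReal (CD Q n).1 ∧
        facNorm (Set.Icc a b) n τ (saY (fun t => (θ' t : ℂ)) n) ≤
          ENNReal.ofReal (CD Q n).2 := by
  set I := Set.Icc a b with hI
  set θ : ℝ → ℂ := fun t => (θ' t : ℂ) with hθdef
  have hθC : ContDiff ℝ ∞ θ := Complex.ofRealCLM.contDiff.comp (hθ.of_le (by simp))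
  have hQ0 : 0 ≤ Q := hQ ▸ ENNReal.toReal_nonneg
  have hQb : facNorm I 1 τ θ ≤ ENNReal.ofReal Q := by
    rw [hQ, ENNReal.ofReal_toReal hfin]
  have hni : ‖-Complex.I‖ = 1 := by simp
  suffices H : ∀ n : ℕ, 1 ≤ n →
      (ContDiff ℝ ∞ (saX θ n) ∧ ContDiff ℝ ∞ (saY θ n) ∧ ContDiff ℝ ∞ (saZ θ n)) ∧
      (n % 2 = 0 → saX θ n = fun _ => 0) ∧
      (n % 2 = 1 → saY θ n = (fun _ => 0) ∧ saZ θ n = (fun _ => 0)) ∧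
      (facNorm I n τ (saX θ n) ≤ ENNReal.ofReal (CD Q n).1 ∧
       facNorm I n τ (saZ θ n) ≤ ENNReal.ofReal (CD Q n).1 ∧
       facNorm I n τ (saY θ n) ≤ ENNReal.ofReal (CD Q n).2) by
    intro n hn
    exact (H n hn).2.2.2
  intro n
  induction n using Nat.strong_induction_on with
  | _ n IH =>
    match n, IH with
    | 0, _ => intro h; omega
    | 1, _ =>
      intro _
      have hX1 := saX_one θ
      have hY1 := saY_one θ
      have hZ1 := saZ_one θ
      have hC10 : (0:ℝ) ≤ (CD Q 1).1 := (CD_nonneg hQ0 1).1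
      have hD10 : (0:ℝ) ≤ (CD Q 1).2 := (CD_nonneg hQ0 1).2
      refine ⟨⟨?_, ?_, ?_⟩, ?_, ?_, ?_, ?_, ?_⟩
      · rw [hX1]; exact contDiff_const.mul hθC
      · rw [hY1]; exact contDiff_const
      · rw [hZ1]; exact contDiff_const
      · intro h; omega
      · intro _; exact ⟨hY1, hZ1⟩
      · rw [hX1, CD_one]
        have h1 := facNorm_cmul_le (-(Complex.I/2)) hθC hQb hQ0
        have h2 : ‖-(Complex.I/2)‖ = 1/2 := by simp
        rw [h2] at h1
        have h3 : (1:ℝ)/2 * Q = Q / 2 := by ring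
        rw [h3] at h1
        simpa using h1
      · rw [hZ1]
        exact facNorm_zero_fun.trans (ENNReal.ofReal_le_ofReal hC10)
      · rw [hY1]
        exact facNorm_zero_fun.trans (ENNReal.ofReal_le_ofReal hD10)
    | (m + 2), IH =>
      intro _
      obtain ⟨⟨hXs, hYs, hZs⟩, hpx, hpyz, hXb, hZb, hYb⟩ := IH (m + 1) (by omega) (by omega)
      have hC1 : (0:ℝ) ≤ (CD Q (m + 1)).1 := (CD_nonneg hQ0 (m + 1)).1
      have hD1 : (0:ℝ) ≤ (CD Q (m + 1)).2 := (CD_nonneg hQ0 (m + 1)).2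
      have e1 : ((m + 2 : ℕ) : ℝ) = ((m + 1 : ℕ) : ℝ) + 1 := by push_cast; ring
      have e2 : ((m + 2 : ℕ) : ℝ) = 1 + ((m + 1 : ℕ) : ℝ) := by push_cast; ring
      have hm1pos : (0:ℝ) < ((m + 1 : ℕ) : ℝ) := Nat.cast_pos.mpr (by omega)
      have hdZ : ContDiff ℝ ∞ (deriv (saZ θ (m + 1))) := (contDiff_infty_iff_deriv.mp hZs).2
      have hdX : ContDiff ℝ ∞ (deriv (saX θ (m + 1))) := (contDiff_infty_iff_deriv.mp hXs).2
      have hprod_s : ContDiff ℝ ∞ (fun t => θ t * saY θ (m + 1) t) := hθC.mul hYs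
      have hXs2 : ContDiff ℝ ∞ (saX θ (m + 2)) := by
        rw [saX_succ]; exact contDiff_const.mul (hdZ.sub hprod_s)
      have hZs2 : ContDiff ℝ ∞ (saZ θ (m + 2)) := by
        rw [saZ_succ]; exact contDiff_const.mul hdX
      have hYs2 : ContDiff ℝ ∞ (saY θ (m + 2)) := by
        rw [saY_succ]
        apply ContDiff.sum
        intro j hj
        have hjm := Finset.mem_Icc.mp j.2
        obtain ⟨⟨hX1s, hY1s, hZ1s⟩, -, -, -, -, -⟩ := IH j.1 (by omega) (by omega)
        obtain ⟨⟨hX2s, hY2s, hZ2s⟩, -, -, -, -, -⟩ := IH (m + 2 - j.1) (by omega) (by omega)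
        exact ((hX1s.neg.mul hX2s).add (hY1s.mul hY2s)).add (hZ1s.mul hZ2s)
      have hpx2 : (m + 2) % 2 = 0 → saX θ (m + 2) = fun _ => 0 := by
        intro h
        obtain ⟨hY0, hZ0⟩ := hpyz (by omega)
        rw [saX_succ, hY0, hZ0]
        funext t; simp
      have hpz2 : (m + 2) % 2 = 1 → saZ θ (m + 2) = fun _ => 0 := by
        intro h
        have hX0 := hpx (by omega)
        rw [saZ_succ, hX0]
        funext t; simp
      have hpy2 : (m + 2) % 2 = 1 → saY θ (m + 2) = fun _ => 0 := by
        intro h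
        rw [saY_succ]
        funext t
        apply Finset.sum_eq_zero
        intro j hj
        have hjm := Finset.mem_Icc.mp j.2
        rcases Nat.mod_two_eq_zero_or_one j.1 with hj0 | hj1
        · obtain ⟨-, hpx1, -, -, -, -⟩ := IH j.1 (by omega) (by omega)
          obtain ⟨-, -, hpyz2', -, -, -⟩ := IH (m + 2 - j.1) (by omega) (by omega)
          obtain ⟨hY20, hZ20⟩ := hpyz2' (by omega)
          have hX10 := hpx1 hj0
          rw [hX10, hY20, hZ20]
          simp
        · obtain ⟨-, -, hpyz1, -, -, -⟩ := IH j.1 (by omega) (by omega)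
          obtain ⟨-, hpx2', -, -, -, -⟩ := IH (m + 2 - j.1) (by omega) (by omega)
          obtain ⟨hY10, hZ10⟩ := hpyz1 hj1
          have hX20 := hpx2' (by omega)
          rw [hY10, hZ10, hX20]
          simp
      -- X bound
      have hdZb : facNorm I (((m + 1 : ℕ) : ℝ) + 1) τ (deriv (saZ θ (m + 1)))
          ≤ ENNReal.ofReal (CD Q (m + 1)).1 := (facNorm_deriv_le _).trans hZb
      rw [← e1] at hdZb
      have hBnn : (0:ℝ) ≤ realBeta 1 ((m + 1 : ℕ) : ℝ) * (Q * (CD Q (m + 1)).2) := by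
        have hb := realBeta_pos one_pos hm1pos
        positivity
      have hprodb : facNorm I (1 + ((m + 1 : ℕ) : ℝ)) τ (fun t => θ t * saY θ (m + 1) t)
          ≤ ENNReal.ofReal (realBeta 1 ((m + 1 : ℕ) : ℝ) * (Q * (CD Q (m + 1)).2)) :=
        facNorm_mul_le hτ one_pos hm1pos hθC hYs hQ0 hD1 hQb hYb
      rw [← e2] at hprodb
      have hsubb := facNorm_sub_le hdZ hprod_s hdZb hprodb hC1 hBnn
      have hXb2' := facNorm_cmul_le (-Complex.I) (hdZ.sub hprod_s) hsubb (by positivity)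
      have hXb2 : facNorm I ((m + 2 : ℕ) : ℝ) τ (saX θ (m + 2))
          ≤ ENNReal.ofReal (CD Q (m + 2)).1 := by
        rw [saX_succ]
        refine hXb2'.trans (ENNReal.ofReal_le_ofReal ?_)
        rw [hni, one_mul, CD_succ_succ]
        dsimp only
        rcases Nat.mod_two_eq_zero_or_one (m + 2) with he | ho
        · rw [if_pos he, CD_snd_odd (show (m + 1) % 2 = 1 by omega)]
          rw [mul_zero, mul_zero, add_zero]
        · rw [if_neg (by omega), realBeta_one_left hm1pos]
          apply le_of_eq
          push_cast
          field_simp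
        -- Z bound
      have hdXb : facNorm I (((m + 1 : ℕ) : ℝ) + 1) τ (deriv (saX θ (m + 1)))
          ≤ ENNReal.ofReal (CD Q (m + 1)).1 := (facNorm_deriv_le _).trans hXb
      rw [← e1] at hdXb
      have hZb2' := facNorm_cmul_le (-Complex.I) hdX hdXb hC1
      have hZb2 : facNorm I ((m + 2 : ℕ) : ℝ) τ (saZ θ (m + 2))
          ≤ ENNReal.ofReal (CD Q (m + 2)).1 := by
        rw [saZ_succ]
        refine hZb2'.trans (ENNReal.ofReal_le_ofReal ?_)
        rw [hni, one_mul]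
        exact CD_fst_mono hQ0 m
      -- Y bound
      have hYb2 : facNorm I ((m + 2 : ℕ) : ℝ) τ (saY θ (m + 2))
          ≤ ENNReal.ofReal (CD Q (m + 2)).2 := by
        rcases Nat.mod_two_eq_zero_or_one (m + 2) with he | ho
        · have hgoal : (CD Q (m + 2)).2 = ∑ j ∈ (Finset.Icc 1 (m + 1)).attach,
              realBeta j.1 ((m + 2 - j.1 : ℕ) : ℝ) *
                ((CD Q j.1).1 * (CD Q (m + 2 - j.1)).1
                  + (CD Q j.1).2 * (CD Q (m + 2 - j.1)).2) := by
            rw [CD_succ_succ]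
            dsimp only
            rw [if_pos he]
          rw [saY_succ, hgoal]
          refine facNorm_sum_le ?_ ?_ ?_
          · intro j hj
            have hjm := Finset.mem_Icc.mp j.2
            obtain ⟨⟨hX1s, hY1s, hZ1s⟩, -, -, -, -, -⟩ := IH j.1 (by omega) (by omega)
            obtain ⟨⟨hX2s, hY2s, hZ2s⟩, -, -, -, -, -⟩ := IH (m + 2 - j.1) (by omega) (by omega)
            exact ((hX1s.neg.mul hX2s).add (hY1s.mul hY2s)).add (hZ1s.mul hZ2s)
          · intro j hj
            have hjm := Finset.mem_Icc.mp j.2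
            have hj1pos : (0:ℝ) < (j.1 : ℝ) := Nat.cast_pos.mpr (by omega)
            have hj2pos : (0:ℝ) < ((m + 2 - j.1 : ℕ) : ℝ) := Nat.cast_pos.mpr (by omega)
            have hBj := realBeta_pos hj1pos hj2pos
            have h1 := (CD_nonneg hQ0 j.1).1
            have h2 := (CD_nonneg hQ0 j.1).2
            have h3 := (CD_nonneg hQ0 (m + 2 - j.1)).1
            have h4 := (CD_nonneg hQ0 (m + 2 - j.1)).2
            positivity
          · intro j hj
            have hjm := Finset.mem_Icc.mp j.2
            have hj1pos : (0:ℝ) < (j.1 : ℝ) := Nat.cast_pos.mpr (by omega)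
            have hj2pos : (0:ℝ) < ((m + 2 - j.1 : ℕ) : ℝ) := Nat.cast_pos.mpr (by omega)
            have hBj := realBeta_pos hj1pos hj2pos
            obtain ⟨⟨hX1s, hY1s, hZ1s⟩, hpx1, hpyz1, hX1b, hZ1b, hY1b⟩ :=
              IH j.1 (by omega) (by omega)
            obtain ⟨⟨hX2s, hY2s, hZ2s⟩, hpx2', hpyz2', hX2b, hZ2b, hY2b⟩ :=
              IH (m + 2 - j.1) (by omega) (by omega)
            have hC1j := (CD_nonneg hQ0 j.1).1
            have hD1j := (CD_nonneg hQ0 j.1).2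
            have hC2j := (CD_nonneg hQ0 (m + 2 - j.1)).1
            have hD2j := (CD_nonneg hQ0 (m + 2 - j.1)).2
            have ej : ((m + 2 : ℕ) : ℝ) = (j.1 : ℝ) + ((m + 2 - j.1 : ℕ) : ℝ) := by
              rw [Nat.cast_sub (by omega : j.1 ≤ m + 2)]
              push_cast
              ring
            rw [ej]
            rcases Nat.mod_two_eq_zero_or_one j.1 with hj0 | hj1
            · have hX10 := hpx1 hj0
              have heq : (fun t => -(saX θ j.1 t) * saX θ (m + 2 - j.1) t
                  + saY θ j.1 t * saY θ (m + 2 - j.1) t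
                  + saZ θ j.1 t * saZ θ (m + 2 - j.1) t)
                  = fun t => saY θ j.1 t * saY θ (m + 2 - j.1) t
                    + saZ θ j.1 t * saZ θ (m + 2 - j.1) t := by
                funext t; rw [hX10]; simp
              rw [heq]
              have hb1 := facNorm_mul_le hτ hj1pos hj2pos hY1s hY2s hD1j hD2j hY1b hY2b
              have hb2 := facNorm_mul_le hτ hj1pos hj2pos hZ1s hZ2s hC1j hC2j hZ1b hZ2b
              have hadd := facNorm_add_le (hY1s.mul hY2s) (hZ1s.mul hZ2s) hb1 hb2
                (by positivity) (by positivity)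
              refine hadd.trans (ENNReal.ofReal_le_ofReal (le_of_eq (by ring)))
            · obtain ⟨hY10, hZ10⟩ := hpyz1 hj1
              have heq : (fun t => -(saX θ j.1 t) * saX θ (m + 2 - j.1) t
                  + saY θ j.1 t * saY θ (m + 2 - j.1) t
                  + saZ θ j.1 t * saZ θ (m + 2 - j.1) t)
                  = fun t => (-1 : ℂ) * (saX θ j.1 t * saX θ (m + 2 - j.1) t) := by
                funext t; rw [hY10, hZ10]; simp
              rw [heq]
              have hb1 := facNorm_mul_le hτ hj1pos hj2pos hX1s hX2s hC1j hC2j hX1b hX2b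
              have hcm := facNorm_cmul_le (-1 : ℂ) (hX1s.mul hX2s) hb1 (by positivity)
              have hn1 : ‖(-1 : ℂ)‖ = 1 := by simp
              rw [hn1, one_mul] at hcm
              refine hcm.trans (ENNReal.ofReal_le_ofReal ?_)
              have hdd : 0 ≤ (CD Q j.1).2 * (CD Q (m + 2 - j.1)).2 := mul_nonneg hD1j hD2j
              nlinarith
        · rw [hpy2 ho, CD_snd_odd ho]
          exact facNorm_zero_fun
      exact ⟨⟨hXs2, hYs2, hZs2⟩, hpx2, fun h => ⟨hpy2 h, hpz2 h⟩, hXb2, hZb2, hYb2⟩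
end

section
/- Let θ' : ℝ → ℝ be smooth and let x_n, y_n, z_n be the functions produced by the superadiabatic recursion from θ'. Then for every n ≥ 1 and every t ∈ ℝ, the differential identity y_n'(t) = −θ'(t)·z_n(t) holds. -/
lemma saZ_eq (θ : ℝ → ℂ) (n : ℕ) : saZ θ (n+2) = fun t => -Complex.I * deriv (saX θ (n+1)) t := by
  simp [saZ, saX, sa]

lemma saX_eq (θ : ℝ → ℂ) (n : ℕ) : saX θ (n+2) = fun t => -Complex.I * (deriv (saZ θ (n+1)) t - θ t * saY θ (n+1) t) := by
  simp [saZ, saX, saY, sa]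

lemma saY_eq (θ : ℝ → ℂ) (n : ℕ) : saY θ (n+2) = fun t => ∑ j ∈ Finset.Icc 1 (n+1),
    (-(saX θ j t) * saX θ (n+2-j) t + saY θ j t * saY θ (n+2-j) t + saZ θ j t * saZ θ (n+2-j) t) := by
  funext t
  rw [saY, sa, ← Finset.sum_attach (Finset.Icc 1 (n+1))]
  rfl

lemma sa_smooth (θ : ℝ → ℂ) (hθ : ContDiff ℝ (⊤ : ℕ∞) θ) (n : ℕ) :
    ContDiff ℝ (⊤ : ℕ∞) (saX θ n) ∧ ContDiff ℝ (⊤ : ℕ∞) (saY θ n) ∧ ContDiff ℝ (⊤ : ℕ∞) (saZ θ n) := by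
  induction n using Nat.strong_induction_on with
  | _ n ih =>
    match n with
    | 0 => refine ⟨?_, ?_, ?_⟩ <;> · simp only [saX, saY, saZ, sa]; exact contDiff_const
    | 1 =>
      refine ⟨?_, ?_, ?_⟩
      · simp only [saX, sa]; exact contDiff_const.mul hθ
      · simp only [saY, sa]; exact contDiff_const
      · simp only [saZ, sa]; exact contDiff_const
    | n + 2 =>
      have ihx := fun m (h : m < n + 2) => (ih m h).1
      have ihy := fun m (h : m < n + 2) => (ih m h).2.1
      have ihz := fun m (h : m < n + 2) => (ih m h).2.2
      refine ⟨?_, ?_, ?_⟩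
      · rw [saX_eq]
        exact contDiff_const.mul (((contDiff_infty_iff_deriv.mp (ihz (n+1) (by omega))).2).sub
          (hθ.mul (ihy (n+1) (by omega))))
      · rw [saY_eq]
        refine ContDiff.sum fun j hj => ?_
        have hj' := Finset.mem_Icc.mp hj
        exact (((ihx j (by omega)).neg.mul (ihx (n+2-j) (by omega))).add
          ((ihy j (by omega)).mul (ihy (n+2-j) (by omega)))).add
          ((ihz j (by omega)).mul (ihz (n+2-j) (by omega)))
      · rw [saZ_eq]
        exact contDiff_const.mul ((contDiff_infty_iff_deriv.mp (ihx (n+1) (by omega))).2)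

lemma derivX (θ : ℝ → ℂ) (k : ℕ) (t : ℝ) :
    deriv (saX θ (k+1)) t = Complex.I * saZ θ (k+2) t := by
  rw [saZ_eq]
  simp [← mul_assoc, Complex.I_mul_I]

lemma derivZ (θ : ℝ → ℂ) (k : ℕ) (t : ℝ) :
    deriv (saZ θ (k+1)) t = Complex.I * saX θ (k+2) t + θ t * saY θ (k+1) t := by
  rw [saX_eq]
  show deriv (saZ θ (k+1)) t = Complex.I * (-Complex.I * (deriv (saZ θ (k+1)) t - θ t * saY θ (k+1) t)) + θ t * saY θ (k+1) t
  linear_combination (deriv (saZ θ (k+1)) t - θ t * saY θ (k+1) t) * Complex.I_mul_I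
lemma deriv_comb (x1 x2 y1 y2 z1 z2 : ℝ → ℂ) (t : ℝ)
    (hx1 : DifferentiableAt ℝ x1 t) (hx2 : DifferentiableAt ℝ x2 t)
    (hy1 : DifferentiableAt ℝ y1 t) (hy2 : DifferentiableAt ℝ y2 t)
    (hz1 : DifferentiableAt ℝ z1 t) (hz2 : DifferentiableAt ℝ z2 t) :
    deriv (fun t => -x1 t * x2 t + y1 t * y2 t + z1 t * z2 t) t
      = -(deriv x1 t * x2 t + x1 t * deriv x2 t) + (deriv y1 t * y2 t + y1 t * deriv y2 t)
        + (deriv z1 t * z2 t + z1 t * deriv z2 t) := by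
  rw [deriv_fun_add ((hx1.fun_neg.fun_mul hx2).fun_add (hy1.fun_mul hy2)) (hz1.fun_mul hz2),
      deriv_fun_add (hx1.fun_neg.fun_mul hx2) (hy1.fun_mul hy2),
      deriv_fun_mul hx1.fun_neg hx2, deriv_fun_mul hy1 hy2, deriv_fun_mul hz1 hz2, deriv.fun_neg]
  ring

theorem stmt9 (θ' : ℝ → ℝ) (hθ : ContDiff ℝ (⊤ : ℕ∞) θ')
    (n : ℕ) (hn : 1 ≤ n) (t : ℝ) :
    deriv (saY (fun s => (θ' s : ℂ)) n) t = -(θ' t : ℂ) * saZ (fun s => (θ' s : ℂ)) n t := by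
  set Θ : ℝ → ℂ := fun s => (θ' s : ℂ) with hΘdef
  have hΘ : ContDiff ℝ (⊤ : ℕ∞) Θ := Complex.ofRealCLM.contDiff.comp (hθ.of_le (by simp))
  have dX : ∀ k, Differentiable ℝ (saX Θ k) :=
    fun k => ((sa_smooth Θ hΘ k).1).differentiable (by simp)
  have dY : ∀ k, Differentiable ℝ (saY Θ k) :=
    fun k => ((sa_smooth Θ hΘ k).2.1).differentiable (by simp)
  have dZ : ∀ k, Differentiable ℝ (saZ Θ k) :=
    fun k => ((sa_smooth Θ hΘ k).2.2).differentiable (by simp)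
  revert hn
  induction n using Nat.strong_induction_on with
  | _ n ih =>
  intro hn
  rcases n with _ | _ | m
  · omega
  · have h1 : saY Θ 1 = 0 := by simp [saY, sa]
    have h2 : saZ Θ 1 = 0 := by simp [saZ, sa]
    rw [h1, h2]
    simp only [neg_mul, Pi.zero_apply, mul_zero, neg_zero]
    exact deriv_const t 0
  · rw [saY_eq]
    have hdiff : ∀ j ∈ Finset.Icc 1 (m+1), DifferentiableAt ℝ
        (fun t => -(saX Θ j t) * saX Θ (m+2-j) t + saY Θ j t * saY Θ (m+2-j) t
          + saZ Θ j t * saZ Θ (m+2-j) t) t :=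
      fun j _ => (((dX j t).neg.mul (dX (m+2-j) t)).add ((dY j t).mul (dY (m+2-j) t))).add
        ((dZ j t).mul (dZ (m+2-j) t))
    rw [deriv_fun_sum hdiff]
    have hΦ := Finset.sum_range_sub (fun i => Complex.I * saX Θ (i+1) t * saZ Θ (m+2-i) t
      - Complex.I * saZ Θ (i+1) t * saX Θ (m+2-i) t) (m+1)
    rw [← Finset.Ico_add_one_right_eq_Icc, Finset.sum_Ico_eq_sum_range,
      show m+1+1-1 = m+1 from rfl]
    calc ∑ i ∈ Finset.range (m+1), deriv
          (fun t => -(saX Θ (1+i) t) * saX Θ (m+2-(1+i)) t + saY Θ (1+i) t * saY Θ (m+2-(1+i)) t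
            + saZ Θ (1+i) t * saZ Θ (m+2-(1+i)) t) t
        = ∑ i ∈ Finset.range (m+1),
            ((Complex.I * saX Θ (i+1+1) t * saZ Θ (m+2-(i+1)) t
              - Complex.I * saZ Θ (i+1+1) t * saX Θ (m+2-(i+1)) t)
             - (Complex.I * saX Θ (i+1) t * saZ Θ (m+2-i) t
              - Complex.I * saZ Θ (i+1) t * saX Θ (m+2-i) t)) := by
          refine Finset.sum_congr rfl fun i hi => ?_
          have him : i ≤ m := by
            have := Finset.mem_range.mp hi; omega
          rw [show (1+i) = i+1 from Nat.add_comm 1 i]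
          rw [show m+2-(i+1) = (m-i)+1 from by omega]
          rw [deriv_comb _ _ _ _ _ _ t (dX (i+1) t) (dX ((m-i)+1) t) (dY (i+1) t)
            (dY ((m-i)+1) t) (dZ (i+1) t) (dZ ((m-i)+1) t)]
          rw [derivX Θ i t, derivX Θ (m-i) t, derivZ Θ i t, derivZ Θ (m-i) t,
            ih (i+1) (by omega) (by omega), ih ((m-i)+1) (by omega) (by omega)]
          rw [show i+1+1 = i+2 from rfl, show (m-i)+2 = m+2-i from by omega]
          ring
      _ = (Complex.I * saX Θ (m+1+1) t * saZ Θ (m+2-(m+1)) t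
            - Complex.I * saZ Θ (m+1+1) t * saX Θ (m+2-(m+1)) t)
          - (Complex.I * saX Θ (0+1) t * saZ Θ (m+2-0) t
            - Complex.I * saZ Θ (0+1) t * saX Θ (m+2-0) t) := hΦ
      _ = -(θ' t : ℂ) * saZ Θ (m+2) t := by
          have hz1 : saZ Θ 1 = 0 := by simp [saZ, sa]
          have hx1 : saX Θ 1 = fun t => -(Complex.I/2) * Θ t := by simp [saX, sa]
          rw [show m+2-(m+1) = 1 from by omega, show m+2-0 = m+2 from rfl,
            show (0:ℕ)+1 = 1 from rfl, show m+1+1 = m+2 from rfl, hz1, hx1]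
          simp only [hΘdef, Pi.zero_apply]
          linear_combination ((θ' t : ℂ) * saZ (fun s => (θ' s : ℂ)) (m+2) t) * Complex.I_mul_I
end

section
/- For every integer p ≥ 2, ∫_0^1 Σ_{j=1}^{p−1} C(p,j) · u^{2j−2} · (1−u)^{2(p−j)−2} du ≤ 5, where C(p,j) is the binomial coefficient. -/
/-!
On `[0, 1]` the outer terms `j = 1` and `j = p - 1` of the integrand are `p (1 - u)^(2p-4)` and
`p u^(2p-4)`, while every inner term `2 ≤ j ≤ p - 2` is dominated by the Bernstein term
`C(p,j) u^j (1 - u)^(p-j)`, and these sum to at most `(u + (1 - u))^p = 1`. Integrating gives the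
bound `2p / (2p - 3) + 1`, which is `5` at `p = 2` (where the two outer terms coincide and are
counted twice) and smaller beyond.
-/

open Finset

theorem Finset.sum_le_add_sum_of_subset_insert {ι M : Type*} [DecidableEq ι] [AddCommMonoid M]
    [PartialOrder M] [IsOrderedAddMonoid M] {f : ι → M} {s t : Finset ι} {a : ι}
    (hf : ∀ i, 0 ≤ f i) (h : s ⊆ insert a t) :
    ∑ i ∈ s, f i ≤ f a + ∑ i ∈ t, f i := by
  refine (sum_le_sum_of_subset_of_nonneg h fun i _ _ => hf i).trans ?_
  by_cases ha : a ∈ t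
  · rw [insert_eq_of_mem ha]
    exact le_add_of_nonneg_left (hf a)
  · rw [sum_insert ha]

theorem sum_choose_mul_pow_mul_one_sub_pow_le_one {p : ℕ} {s : Finset ℕ}
    (hs : s ⊆ range (p + 1)) {u : ℝ} (hu : u ∈ Set.Icc (0 : ℝ) 1) :
    ∑ j ∈ s, (p.choose j : ℝ) * u ^ j * (1 - u) ^ (p - j) ≤ 1 := by
  obtain ⟨hu0, hu1⟩ := hu
  have hsub : 0 ≤ 1 - u := sub_nonneg.mpr hu1
  calc ∑ j ∈ s, (p.choose j : ℝ) * u ^ j * (1 - u) ^ (p - j)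
      ≤ ∑ j ∈ range (p + 1), (p.choose j : ℝ) * u ^ j * (1 - u) ^ (p - j) :=
        sum_le_sum_of_subset_of_nonneg hs fun _ _ _ => by positivity
    _ = (u + (1 - u)) ^ p := by
        rw [add_pow]
        exact sum_congr rfl fun j _ => by ring
    _ = 1 := by simp

theorem sum_choose_mul_pow_mul_one_sub_pow_sub_two_le (p : ℕ) (hp : 2 ≤ p) {u : ℝ}
    (hu : u ∈ Set.Icc (0 : ℝ) 1) :
    ∑ j ∈ Icc 1 (p - 1), (p.choose j : ℝ) * u ^ (2 * j - 2) * (1 - u) ^ (2 * (p - j) - 2)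
      ≤ p * (1 - u) ^ (2 * p - 4) + p * u ^ (2 * p - 4) + 1 := by
  obtain ⟨hu0, hu1⟩ := hu
  have hsub0 : 0 ≤ 1 - u := sub_nonneg.mpr hu1
  have hsub1 : 1 - u ≤ 1 := by linarith
  set f : ℕ → ℝ := fun j => (p.choose j : ℝ) * u ^ (2 * j - 2) * (1 - u) ^ (2 * (p - j) - 2)
  have hf : ∀ j, 0 ≤ f j := fun j => by positivity
  have hsplit : Icc 1 (p - 1) ⊆ insert 1 (insert (p - 1) (Icc 2 (p - 2))) := by
    intro j hj
    simp only [mem_Icc, mem_insert] at hj ⊢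
    omega
  have hfirst : f 1 = p * (1 - u) ^ (2 * p - 4) := by
    simp only [f, Nat.choose_one_right, Nat.sub_self, pow_zero, mul_one]
    congr 2
    omega
  have hlast : f (p - 1) = p * u ^ (2 * p - 4) := by
    simp only [f, Nat.choose_symm_of_eq_add (by omega : p = p - 1 + 1), Nat.choose_one_right,
      Nat.sub_sub_self (by omega : 1 ≤ p), Nat.sub_self, pow_zero, mul_one]
    congr 2
    omega
  have hinner : ∑ j ∈ Icc 2 (p - 2), f j ≤ 1 := by
    refine (sum_le_sum fun j hj => ?_).trans
      (sum_choose_mul_pow_mul_one_sub_pow_le_one (p := p) ?_ ⟨hu0, hu1⟩)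
    · rw [mem_Icc] at hj
      have hu' : u ^ (2 * j - 2) ≤ u ^ j := pow_le_pow_of_le_one hu0 hu1 (by omega)
      have hv' : (1 - u) ^ (2 * (p - j) - 2) ≤ (1 - u) ^ (p - j) :=
        pow_le_pow_of_le_one hsub0 hsub1 (by omega)
      simp only [f, mul_assoc]
      gcongr
    · intro j hj
      simp only [mem_Icc, mem_range] at hj ⊢
      omega
  calc ∑ j ∈ Icc 1 (p - 1), f j ≤ f 1 + ∑ j ∈ insert (p - 1) (Icc 2 (p - 2)), f j :=
        sum_le_add_sum_of_subset_insert hf hsplit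
    _ ≤ f 1 + (f (p - 1) + ∑ j ∈ Icc 2 (p - 2), f j) := by
        gcongr
        exact sum_le_add_sum_of_subset_insert hf subset_rfl
    _ ≤ p * (1 - u) ^ (2 * p - 4) + p * u ^ (2 * p - 4) + 1 := by
        rw [hfirst, hlast]
        linarith

theorem integral_mul_one_sub_pow_add_mul_pow_add_one (c : ℝ) (n : ℕ) :
    ∫ u in (0 : ℝ)..1, (c * (1 - u) ^ n + c * u ^ n + 1) = 2 * c / (n + 1) + 1 := by
  have hpow : ∫ u in (0 : ℝ)..1, u ^ n = 1 / (n + 1) := by simp [integral_pow]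
  have hpow' : ∫ u in (0 : ℝ)..1, (1 - u) ^ n = 1 / (n + 1) := by
    simpa [hpow] using
      intervalIntegral.integral_comp_sub_left (fun x : ℝ => x ^ n) (a := 0) (b := 1) 1
  rw [intervalIntegral.integral_add (Continuous.intervalIntegrable (by fun_prop) _ _)
      (Continuous.intervalIntegrable (by fun_prop) _ _),
    intervalIntegral.integral_add (Continuous.intervalIntegrable (by fun_prop) _ _)
      (Continuous.intervalIntegrable (by fun_prop) _ _),
    intervalIntegral.integral_const_mul, intervalIntegral.integral_const_mul, hpow, hpow']
  simp only [intervalIntegral.integral_const, sub_zero, smul_eq_mul, mul_one]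
  ring

theorem stmt14 (p : ℕ) (hp : 2 ≤ p) :
    (∫ u in (0 : ℝ)..1, ∑ j ∈ Finset.Icc 1 (p - 1),
        (p.choose j : ℝ) * u ^ (2 * j - 2) * (1 - u) ^ (2 * (p - j) - 2)) ≤ 5 := by
  have hdeg : ((2 * p - 4 : ℕ) : ℝ) + 1 = 2 * p - 3 := by
    rw [Nat.cast_sub (by omega)]
    push_cast
    ring
  have hp' : (2 : ℝ) ≤ p := by exact_mod_cast hp
  calc (∫ u in (0 : ℝ)..1, ∑ j ∈ Icc 1 (p - 1),
        (p.choose j : ℝ) * u ^ (2 * j - 2) * (1 - u) ^ (2 * (p - j) - 2))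
      ≤ ∫ u in (0 : ℝ)..1, (p * (1 - u) ^ (2 * p - 4) + p * u ^ (2 * p - 4) + 1) :=
        intervalIntegral.integral_mono_on zero_le_one
          (Continuous.intervalIntegrable (by fun_prop) _ _)
          (Continuous.intervalIntegrable (by fun_prop) _ _)
          fun u hu => sum_choose_mul_pow_mul_one_sub_pow_sub_two_le p hp hu
    _ = 2 * p / (2 * p - 3) + 1 := by
        rw [integral_mul_one_sub_pow_add_mul_pow_add_one, hdeg]
    _ ≤ 5 := by
        rw [div_add_one (by linarith), div_le_iff₀ (by linarith)]
        linarith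
end

section
/- For all integers n and p with p ≥ 2 and n ≥ 2p, one has Σ_{j=1}^{p−1} Σ_{k=0}^{n−2p} C(p,j) · B(2j+k−1, n−2j−k−1) ≤ 10, where C(p,j) is the binomial coefficient and B is the Beta function (note that both arguments of B are ≥ 1 in this range). -/
/-!
At natural arguments `B(a+1, b+1) = 1 / ((a+b+1) C(a+b, a))`. Every term of the double sum has
`a + b = n - 4`, and Vandermonde's `C(n-4, 2j-2+k) ≥ C(2p-4, 2j-2) C(n-2p, k)` bounds the sum by
`(∑_j C(p,j) / C(2p-4, 2j-2)) (∑_k 1 / C(n-2p, k)) / (n-3)`. The ratio `C(p,j) / C(2p-4, 2j-2)` is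
`p` at `j = 1` and `j = p-1` and at most `1` in between, so the first factor is at most `3(p-1)`;
the second is at most `3` because `C(M,k) ≥ M` for `0 < k < M`. Finally `9(p-1) ≤ 10(n-3)`.
-/

open Finset
open scoped Nat

theorem realBeta_natCast_add_one (a b : ℕ) :
    realBeta ((a + 1 : ℕ) : ℝ) ((b + 1 : ℕ) : ℝ) =
      1 / (((a + b + 1 : ℕ) : ℝ) * (a + b).choose a) := by
  have hchoose : ((a + b).choose a * a ! * b ! : ℝ) = (a + b)! := by
    exact_mod_cast by simpa using Nat.choose_mul_factorial_mul_factorial (Nat.le_add_right a b)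
  have hsum : ((a + 1 : ℕ) : ℝ) + ((b + 1 : ℕ) : ℝ) = ((a + b + 1 : ℕ) : ℝ) + 1 := by
    push_cast; ring
  rw [realBeta, hsum, Nat.cast_succ a, Nat.cast_succ b, Real.Gamma_nat_eq_factorial,
    Real.Gamma_nat_eq_factorial, Real.Gamma_nat_eq_factorial, Nat.factorial_succ]
  push_cast
  rw [← hchoose]
  field_simp

theorem Nat.choose_mul_choose_le_choose_add (A B u v : ℕ) :
    A.choose u * B.choose v ≤ (A + B).choose (u + v) := by
  rw [Nat.add_choose_eq]
  exact single_le_sum (f := fun ij : ℕ × ℕ => A.choose ij.1 * B.choose ij.2)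
    (fun _ _ => Nat.zero_le _) (a := (u, v)) (mem_antidiagonal.mpr rfl)

theorem Nat.choose_le_choose_add_add {B v : ℕ} (A u : ℕ) (hv : v ≤ B) :
    A.choose u ≤ (A + B).choose (u + v) :=
  (Nat.le_mul_of_pos_right _ (Nat.choose_pos hv)).trans (A.choose_mul_choose_le_choose_add B u v)

theorem Nat.le_choose_of_pos_of_lt {M k : ℕ} (hk : 0 < k) (hkM : k < M) : M ≤ M.choose k := by
  induction M generalizing k with
  | zero => omega
  | succ m ih =>
    obtain ⟨i, rfl⟩ : ∃ i, k = i + 1 := ⟨k - 1, by omega⟩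
    rw [Nat.choose_succ_succ']
    rcases Nat.eq_zero_or_pos i with rfl | hi
    · simp [add_comm]
    · have := ih hi (by omega)
      have := Nat.choose_pos (n := m) (k := i + 1) (by omega)
      omega

theorem sum_range_inv_choose_le_three (M : ℕ) :
    ∑ k ∈ range (M + 1), (M.choose k : ℝ)⁻¹ ≤ 3 := by
  rcases M with _ | m
  · norm_num
  rw [sum_range_succ, sum_range_succ']
  have hmid : ∑ i ∈ range m, ((m + 1).choose (i + 1) : ℝ)⁻¹ ≤ 1 :=
    calc ∑ i ∈ range m, ((m + 1).choose (i + 1) : ℝ)⁻¹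
        ≤ ∑ i ∈ range m, ((m + 1 : ℕ) : ℝ)⁻¹ := by
          refine sum_le_sum fun i hi => ?_
          have := Nat.le_choose_of_pos_of_lt (M := m + 1) (k := i + 1) (by omega)
            (by simp at hi; omega)
          gcongr
      _ ≤ 1 := by
          rw [sum_const, card_range, nsmul_eq_mul, ← div_eq_mul_inv,
            div_le_one (by positivity)]
          push_cast; linarith
  simp only [Nat.choose_zero_right, Nat.choose_self, Nat.cast_one, inv_one]
  linarith

theorem choose_div_choose_two_mul_sub_le {p j : ℕ} (hj : 1 ≤ j) (hjp : j < p) :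
    (p.choose j : ℝ) / (2 * p - 4).choose (2 * j - 2)
      ≤ 1 + (if j = 1 then (p : ℝ) - 1 else 0) + (if j = p - 1 then (p : ℝ) - 1 else 0) := by
  have hp : (2 : ℝ) ≤ p := by exact_mod_cast (show 2 ≤ p by omega)
  by_cases h1 : j = 1
  · subst h1
    simp only [mul_one, Nat.sub_self, Nat.choose_zero_right, Nat.choose_one_right, if_true,
      Nat.cast_one, div_one]
    split_ifs <;> linarith
  by_cases h2 : j = p - 1
  · subst h2
    rw [show 2 * (p - 1) - 2 = 2 * p - 4 by omega, Nat.choose_self,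
      Nat.choose_symm_of_eq_add (show p = p - 1 + 1 by omega), Nat.choose_one_right]
    simp [h1]
  · have hle : p.choose j ≤ (2 * p - 4).choose (2 * j - 2) := by
      have := Nat.choose_le_choose_add_add p j (show j - 2 ≤ p - 4 by omega)
      rwa [show p + (p - 4) = 2 * p - 4 by omega, show j + (j - 2) = 2 * j - 2 by omega] at this
    have hpos : (0 : ℝ) < (2 * p - 4).choose (2 * j - 2) := by
      exact_mod_cast Nat.choose_pos (by omega)
    rw [if_neg h1, if_neg h2, div_le_iff₀ hpos]
    have : (p.choose j : ℝ) ≤ (2 * p - 4).choose (2 * j - 2) := by exact_mod_cast hle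
    linarith

theorem sum_choose_div_choose_two_mul_sub_le {p : ℕ} (hp : 2 ≤ p) :
    ∑ j ∈ Icc 1 (p - 1), (p.choose j : ℝ) / (2 * p - 4).choose (2 * j - 2) ≤ 3 * ((p : ℝ) - 1) :=
  calc ∑ j ∈ Icc 1 (p - 1), (p.choose j : ℝ) / (2 * p - 4).choose (2 * j - 2)
      ≤ ∑ j ∈ Icc 1 (p - 1),
          (1 + (if j = 1 then (p : ℝ) - 1 else 0) + (if j = p - 1 then (p : ℝ) - 1 else 0)) :=
        sum_le_sum fun j hj => by
          rw [mem_Icc] at hj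
          exact choose_div_choose_two_mul_sub_le hj.1 (by omega)
    _ = 3 * ((p : ℝ) - 1) := by
        rw [sum_add_distrib, sum_add_distrib, sum_const, Nat.card_Icc, sum_ite_eq',
          sum_ite_eq', if_pos (by simp; omega), if_pos (by simp; omega), nsmul_eq_mul,
          Nat.add_sub_cancel, Nat.cast_sub (by omega)]
        push_cast; ring

theorem realBeta_le_inv_choose_mul_choose {n p j k : ℕ} (hj : 1 ≤ j) (hjp : j < p)
    (hn : 2 * p ≤ n) (hk : k ≤ n - 2 * p) :
    realBeta ((2 * j + k - 1 : ℕ) : ℝ) ((n - 2 * j - k - 1 : ℕ) : ℝ)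
      ≤ 1 / (((n - 3 : ℕ) : ℝ) * (2 * p - 4).choose (2 * j - 2) * (n - 2 * p).choose k) := by
  rw [show 2 * j + k - 1 = 2 * j - 2 + k + 1 by omega,
    show n - 2 * j - k - 1 = n - 2 * j - k - 2 + 1 by omega, realBeta_natCast_add_one,
    show 2 * j - 2 + k + (n - 2 * j - k - 2) = 2 * p - 4 + (n - 2 * p) by omega,
    show 2 * p - 4 + (n - 2 * p) + 1 = n - 3 by omega, mul_assoc]
  have hpos : 0 < (n - 3) * ((2 * p - 4).choose (2 * j - 2) * (n - 2 * p).choose k) :=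
    Nat.mul_pos (by omega) (Nat.mul_pos (Nat.choose_pos (by omega)) (Nat.choose_pos hk))
  gcongr
  · exact_mod_cast hpos
  · exact_mod_cast Nat.choose_mul_choose_le_choose_add _ _ _ _

theorem choose_mul_realBeta_le {n p j k : ℕ} (hj : 1 ≤ j) (hjp : j < p)
    (hn : 2 * p ≤ n) (hk : k ≤ n - 2 * p) :
    (p.choose j : ℝ) * realBeta ((2 * j + k - 1 : ℕ) : ℝ) ((n - 2 * j - k - 1 : ℕ) : ℝ)
      ≤ (p.choose j : ℝ) / (2 * p - 4).choose (2 * j - 2) * ((n - 2 * p).choose k : ℝ)⁻¹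
          / ((n - 3 : ℕ) : ℝ) :=
  calc _ ≤ (p.choose j : ℝ) * (1 / (((n - 3 : ℕ) : ℝ) * (2 * p - 4).choose (2 * j - 2)
          * (n - 2 * p).choose k)) := by
        gcongr
        exact realBeta_le_inv_choose_mul_choose hj hjp hn hk
    _ = _ := by ring

theorem stmt15 (n p : ℕ) (hp : 2 ≤ p) (hn : 2 * p ≤ n) :
    ∑ j ∈ Finset.Icc 1 (p - 1), ∑ k ∈ Finset.range (n - 2 * p + 1),
        (p.choose j : ℝ) * realBeta ((2 * j + k - 1 : ℕ) : ℝ) ((n - 2 * j - k - 1 : ℕ) : ℝ) ≤ 10 := by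
  have hpR : (2 : ℝ) ≤ p := by exact_mod_cast hp
  have hnR : (2 * p : ℝ) ≤ n := by exact_mod_cast hn
  have hn3 : (0 : ℝ) < ((n - 3 : ℕ) : ℝ) := by exact_mod_cast (show 0 < n - 3 by omega)
  calc _ ≤ ∑ j ∈ Icc 1 (p - 1), ∑ k ∈ range (n - 2 * p + 1),
          (p.choose j : ℝ) / (2 * p - 4).choose (2 * j - 2) * ((n - 2 * p).choose k : ℝ)⁻¹
            / ((n - 3 : ℕ) : ℝ) := by
        exact sum_le_sum fun j hj => sum_le_sum fun k hk =>
          choose_mul_realBeta_le (mem_Icc.mp hj).1 (by grind) hn (by grind)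
    _ = (∑ j ∈ Icc 1 (p - 1), (p.choose j : ℝ) / (2 * p - 4).choose (2 * j - 2))
          * (∑ k ∈ range (n - 2 * p + 1), ((n - 2 * p).choose k : ℝ)⁻¹) / ((n - 3 : ℕ) : ℝ) := by
        rw [sum_mul_sum, sum_div]
        simp_rw [sum_div]
    _ ≤ 3 * ((p : ℝ) - 1) * 3 / ((n - 3 : ℕ) : ℝ) := by
        gcongr
        · linarith
        · exact sum_choose_div_choose_two_mul_sub_le hp
        · exact sum_range_inv_choose_le_three _
    _ ≤ 10 := by
        rw [div_le_iff₀ hn3, Nat.cast_sub (by omega)]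
        push_cast
        linarith
end

section
/- For every integer p ≥ 2, Σ_{j=1}^{p−1} C(p,j) · B(2j, 2(p−j)) / ((2j−1)(2(p−j)−1)) ≤ 5 / ((2p−1)(2p−2)), where C(p,j) is the binomial coefficient and B is the Beta function. -/
open Nat Finset

theorem Nat.add_choose_le_add_choose {a b c d : ℕ} (hac : a ≤ c) (hbd : b ≤ d) :
    (a + b).choose a ≤ (c + d).choose c :=
  calc (a + b).choose a = (a + b).choose b := choose_symm_add
    _ ≤ (c + b).choose b := choose_le_choose b (by omega)
    _ = (c + b).choose c := choose_symm_add.symm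
    _ ≤ (c + d).choose c := choose_le_choose c (by omega)

theorem Nat.add_choose_mul_factorial_two_mul_le {a b : ℕ} (ha : 1 ≤ a) (hb : 1 ≤ b) :
    (a + 1 + (b + 1)).choose (a + 1) * (2 * a)! * (2 * b)! ≤ (2 * a + 2 * b)! :=
  calc (a + 1 + (b + 1)).choose (a + 1) * (2 * a)! * (2 * b)!
      ≤ (2 * a + 2 * b).choose (2 * a) * (2 * a)! * (2 * b)! := by
        gcongr; exact add_choose_le_add_choose (by omega) (by omega)
    _ = (2 * a + 2 * b)! := by
        rw [choose_symm_add, add_choose_mul_factorial_mul_factorial]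

theorem Nat.exists_eq_add_one_of_mem_Icc_one_sub_one {p j : ℕ} (hj : j ∈ Icc 1 (p - 1)) :
    ∃ a b, j = a + 1 ∧ p = a + 1 + (b + 1) := by
  rw [mem_Icc] at hj
  exact ⟨j - 1, p - j - 1, by omega, by omega⟩

-- The end terms are absorbed by indicators rather than split off the sum, since for `p = 2`
-- the two ends coincide.
theorem Nat.choose_mul_factorial_le_add_ite (p j : ℕ) (hj : j ∈ Icc 1 (p - 1)) :
    p.choose j * (2 * j - 2)! * (2 * (p - j) - 2)! ≤
      (2 * p - 4)! + ((if j = 1 then (p - 1) * (2 * p - 4)! else 0) +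
        (if j = p - 1 then (p - 1) * (2 * p - 4)! else 0)) := by
  obtain ⟨a, b, rfl, rfl⟩ := exists_eq_add_one_of_mem_Icc_one_sub_one hj
  rw [show 2 * (a + 1) - 2 = 2 * a by omega, show 2 * (a + 1 + (b + 1) - (a + 1)) - 2 = 2 * b by omega,
    show 2 * (a + 1 + (b + 1)) - 4 = 2 * a + 2 * b by omega, show a + 1 + (b + 1) - 1 = a + b + 1 by omega]
  rcases Nat.eq_zero_or_pos a with rfl | ha
  · simp [add_mul, add_comm]
  rcases Nat.eq_zero_or_pos b with rfl | hb
  · rw [zero_add, choose_succ_self_right]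
    simp [ha.ne']
    ring_nf
    omega
  have := add_choose_mul_factorial_two_mul_le ha hb
  simp only [if_neg (by omega : a + 1 ≠ 1), if_neg (by omega : a + 1 ≠ a + b + 1)]
  omega

theorem Nat.sum_choose_mul_factorial_le (p : ℕ) (hp : 2 ≤ p) :
    ∑ j ∈ Icc 1 (p - 1), p.choose j * (2 * j - 2)! * (2 * (p - j) - 2)! ≤ 5 * (2 * p - 3)! := by
  calc ∑ j ∈ Icc 1 (p - 1), p.choose j * (2 * j - 2)! * (2 * (p - j) - 2)!
      ≤ ∑ j ∈ Icc 1 (p - 1), ((2 * p - 4)! + ((if j = 1 then (p - 1) * (2 * p - 4)! else 0) +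
          (if j = p - 1 then (p - 1) * (2 * p - 4)! else 0))) :=
        sum_le_sum fun j hj ↦ choose_mul_factorial_le_add_ite p j hj
    _ = 3 * (p - 1) * (2 * p - 4)! := by
        rw [sum_add_distrib, sum_add_distrib, sum_const, card_Icc, sum_ite_eq', sum_ite_eq',
          if_pos (left_mem_Icc.2 (by omega)), if_pos (right_mem_Icc.2 (by omega)), smul_eq_mul,
          show p - 1 + 1 - 1 = p - 1 by omega]
        ring
    _ ≤ 5 * (2 * p - 3) * (2 * p - 4)! := Nat.mul_le_mul_right _ (by omega)
    _ = 5 * (2 * p - 3)! := by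
        rw [show 2 * p - 3 = 2 * p - 4 + 1 by omega, factorial_succ, mul_assoc]

theorem realBeta_natCast_add_one_s17 (m n : ℕ) :
    realBeta ((m + 1 : ℕ) : ℝ) ((n + 1 : ℕ) : ℝ) = m ! * n ! / (m + n + 1 : ℕ)! := by
  push_cast
  rw [realBeta, Real.Gamma_nat_eq_factorial, Real.Gamma_nat_eq_factorial,
    show (m + 1 : ℝ) + (n + 1) = (m + n + 1 : ℕ) + 1 by push_cast; ring, Real.Gamma_nat_eq_factorial]

theorem choose_mul_realBeta_div_eq (p j : ℕ) (hj : j ∈ Icc 1 (p - 1)) :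
    (p.choose j : ℝ) * realBeta ((2 * j : ℕ) : ℝ) ((2 * (p - j) : ℕ) : ℝ) /
        ((2 * (j : ℝ) - 1) * (2 * ((p : ℝ) - (j : ℝ)) - 1)) =
      ((p.choose j * (2 * j - 2)! * (2 * (p - j) - 2)! : ℕ) : ℝ) / (2 * p - 1)! := by
  obtain ⟨a, b, rfl, rfl⟩ := exists_eq_add_one_of_mem_Icc_one_sub_one hj
  rw [show 2 * (a + 1) - 2 = 2 * a by omega, show 2 * (a + 1 + (b + 1) - (a + 1)) - 2 = 2 * b by omega,
    show 2 * (a + 1 + (b + 1)) - 1 = 2 * a + 1 + (2 * b + 1) + 1 by omega,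
    show 2 * (a + 1 + (b + 1) - (a + 1)) = 2 * b + 1 + 1 by omega,
    show 2 * (a + 1) = 2 * a + 1 + 1 by omega, realBeta_natCast_add_one_s17,
    factorial_succ (2 * a), factorial_succ (2 * b)]
  push_cast
  rw [show 2 * ((a : ℝ) + 1) - 1 = 2 * a + 1 by ring,
    show 2 * ((a : ℝ) + 1 + (b + 1) - (a + 1)) - 1 = 2 * b + 1 by ring]
  field_simp

theorem factorial_sub_three_div_factorial_sub_one (p : ℕ) (hp : 2 ≤ p) :
    ((2 * p - 3)! : ℝ) / (2 * p - 1)! = 1 / ((2 * (p : ℝ) - 1) * (2 * (p : ℝ) - 2)) := by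
  obtain ⟨d, rfl⟩ : ∃ d, p = d + 2 := ⟨p - 2, by omega⟩
  rw [show 2 * (d + 2) - 1 = 2 * d + 1 + 1 + 1 by omega, show 2 * (d + 2) - 3 = 2 * d + 1 by omega,
    factorial_succ (2 * d + 1 + 1), factorial_succ (2 * d + 1)]
  push_cast
  rw [show (2 * ((d : ℝ) + 2) - 1) * (2 * ((d : ℝ) + 2) - 2) = (2 * d + 1 + 1 + 1) * (2 * d + 1 + 1)
    by ring]
  field_simp

theorem stmt17 (p : ℕ) (hp : 2 ≤ p) :
    ∑ j ∈ Finset.Icc 1 (p - 1),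
        (p.choose j : ℝ) * realBeta ((2 * j : ℕ) : ℝ) ((2 * (p - j) : ℕ) : ℝ) /
          ((2 * (j : ℝ) - 1) * (2 * ((p : ℝ) - (j : ℝ)) - 1)) ≤
      5 / ((2 * (p : ℝ) - 1) * (2 * (p : ℝ) - 2)) := by
  rw [sum_congr rfl fun j hj ↦ choose_mul_realBeta_div_eq p j hj, ← sum_div, ← Nat.cast_sum]
  calc ((∑ j ∈ Icc 1 (p - 1), p.choose j * (2 * j - 2)! * (2 * (p - j) - 2)! : ℕ) : ℝ) /
        (2 * p - 1)!
      ≤ ((5 * (2 * p - 3)! : ℕ) : ℝ) / (2 * p - 1)! := by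
        gcongr; exact sum_choose_mul_factorial_le p hp
    _ = 5 / ((2 * (p : ℝ) - 1) * (2 * (p : ℝ) - 2)) := by
        rw [Nat.cast_mul, mul_div_assoc, factorial_sub_three_div_factorial_sub_one p hp,
          mul_one_div, Nat.cast_ofNat]
end
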